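/- arXiv:dg-ga/9605004 — 7 statements merged into one kernel-verified Lean document; each statement's English description precedes it below -/
import Mathlib

section
/- Any bounded positive solution v of v'' - ((N-2)^2/4) v + (N(N-2)/4) v^{(N+2)/(N-2)} = 0 satisfies H(v(t), v'(t)) ≤ 0 for all t. -/
set_option maxHeartbeats 1000000 in

/-- Any bounded positive solution of the Delaunay ODE
`v'' - ((N-2)²/4) v + (N(N-2)/4) v^{(N+2)/(N-2)} = 0` has nonpositive
Hamiltonian energy: `H(v(t), v'(t)) ≤ 0` for all `t`. -/
theorem bounded_solution_nonpos_energy (N : ℕ) (hN : 3 ≤ N) (v : ℝ → ℝ)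
    (hv : ContDiff ℝ 2 v) (hpos : ∀ t, 0 < v t)
    (hbdd : ∃ M : ℝ, ∀ t, v t ≤ M)
    (hbdd' : ∃ M : ℝ, ∀ t, |deriv v t| ≤ M)
    (hode : ∀ t, deriv (deriv v) t - (((N : ℝ) - 2) ^ 2 / 4) * v t
      + ((N : ℝ) * ((N : ℝ) - 2) / 4) * v t ^ (((N : ℝ) + 2) / ((N : ℝ) - 2)) = 0) :
    ∀ t : ℝ, (deriv v t) ^ 2 - (((N : ℝ) - 2) ^ 2 / 4) * (v t) ^ 2
        + (((N : ℝ) - 2) ^ 2 / 4) * v t ^ (2 * (N : ℝ) / ((N : ℝ) - 2)) ≤ 0 := by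
  have hN3 : (3:ℝ) ≤ (N:ℝ) := by exact_mod_cast hN
  set c : ℝ := ((N : ℝ) - 2) ^ 2 / 4 with hc
  set b : ℝ := (N : ℝ) * ((N : ℝ) - 2) / 4 with hb
  set p : ℝ := ((N : ℝ) + 2) / ((N : ℝ) - 2) with hp
  set q : ℝ := 2 * (N : ℝ) / ((N : ℝ) - 2) with hq
  have hd : (0:ℝ) < (N:ℝ) - 2 := by linarith
  have hcq : c * q = 2 * b := by rw [hc, hq, hb]; field_simp
  -- differentiability
  have h1 : ContDiff ℝ (1+1) v := by norm_num at hv ⊢; exact hv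
  rw [contDiff_succ_iff_deriv] at h1
  have hv1 : Differentiable ℝ v := h1.1
  have hv2 : Differentiable ℝ (deriv v) := h1.2.2.differentiable one_ne_zero
  -- energy has zero derivative
  have hF : ∀ s : ℝ, HasDerivAt (fun s => deriv v s ^ 2 - c * v s ^ 2 + c * v s ^ q) 0 s := by
    intro s
    have hds : HasDerivAt v (deriv v s) s := (hv1 s).hasDerivAt
    have hds2 : HasDerivAt (deriv v) (deriv (deriv v) s) s := (hv2 s).hasDerivAt
    have hrp : HasDerivAt (fun y => v y ^ q) (deriv v s * q * v s ^ (q - 1)) s :=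
      hds.rpow_const (Or.inl (hpos s).ne')
    have hqp : q - 1 = p := by rw [hq, hp]; field_simp; ring
    rw [hqp] at hrp
    have hodes := hode s
    have := ((hds2.pow 2).sub ((hds.pow 2).const_mul c)).add (hrp.const_mul c)
    refine this.congr_deriv ?_
    symm
    push_cast
    norm_num
    linear_combination (-2 * deriv v s) * hodes - (deriv v s * v s ^ p) * hcq
  have hconst : ∀ s : ℝ,
      deriv v s ^ 2 - c * v s ^ 2 + c * v s ^ q
        = deriv v 0 ^ 2 - c * v 0 ^ 2 + c * v 0 ^ q := by
    intro s
    have := is_const_of_deriv_eq_zero (f := fun s => deriv v s ^ 2 - c * v s ^ 2 + c * v s ^ q)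
      (fun x => (hF x).differentiableAt) (fun x => (hF x).deriv) s 0
    simpa using this
  intro t
  rw [hconst t]
  by_contra hcon
  push_neg at hcon
  set E0 : ℝ := deriv v 0 ^ 2 - c * v 0 ^ 2 + c * v 0 ^ q with hE0
  obtain ⟨M, hM⟩ := hbdd
  have hM0 : 0 < M := lt_of_lt_of_le (hpos 0) (hM 0)
  set a : ℝ := E0 / M ^ 2 with ha
  have ha0 : 0 < a := div_pos hcon (by positivity)
  -- derivative of Q = v'/v
  have hQd : ∀ s : ℝ, HasDerivAt (fun y => deriv v y / v y)
      ((deriv (deriv v) s * v s - deriv v s * deriv v s) / v s ^ 2) s :=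
    fun s => (hv2 s).hasDerivAt.div (hv1 s).hasDerivAt (hpos s).ne'
  have hkey : ∀ s : ℝ,
      (deriv (deriv v) s * v s - deriv v s * deriv v s) / v s ^ 2 ≤ -a := by
    intro s
    have hvs := hpos s
    have hEs := hconst s
    have hodes := hode s
    have hpq : v s ^ p * v s = v s ^ q := by
      rw [← Real.rpow_add_one hvs.ne' p]
      congr 1
      rw [hp, hq]; field_simp; ring
    have hvq : 0 < v s ^ q := Real.rpow_pos_of_pos hvs q
    have hbc : c ≤ b := by rw [hb, hc]; nlinarith
    have heq : deriv (deriv v) s * v s - deriv v s * deriv v s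
        = -E0 - (b - c) * v s ^ q := by
      linear_combination v s * hodes - hEs - b * hpq
    have hnum : deriv (deriv v) s * v s - deriv v s * deriv v s ≤ -E0 := by
      rw [heq]
      nlinarith [mul_nonneg (sub_nonneg.mpr hbc) hvq.le]
    have hv2M : v s ^ 2 ≤ M ^ 2 := by nlinarith [hM s, hvs]
    have h1' : (deriv (deriv v) s * v s - deriv v s * deriv v s) / v s ^ 2
        ≤ -E0 / v s ^ 2 := by gcongr
    have h2' : -E0 / v s ^ 2 ≤ -E0 / M ^ 2 := by
      rw [neg_div, neg_div, neg_le_neg_iff]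
      gcongr
    calc _ ≤ -E0 / v s ^ 2 := h1'
      _ ≤ -E0 / M ^ 2 := h2'
      _ = -a := by rw [ha, neg_div]
  have hlin : ∀ (k x : ℝ), HasDerivAt (fun y : ℝ => k * y) k x := by
    intro k x
    simpa using (hasDerivAt_id x).const_mul k
  -- Q decays linearly
  have hQdecay : ∀ s : ℝ, 0 ≤ s → deriv v s / v s ≤ deriv v 0 / v 0 - a * s := by
    intro s hs
    have hanti : Antitone (fun y => deriv v y / v y + a * y) := by
      apply antitone_of_deriv_nonpos
      · exact fun y => ((hQd y).add (hlin a y)).differentiableAt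
      · intro y
        erw [((hQd y).add (hlin a y)).deriv]
        linarith [hkey y]
    have h5 : deriv v s / v s + a * s ≤ deriv v 0 / v 0 + a * 0 := hanti hs
    simp only [mul_zero, add_zero] at h5
    linarith
  set T0 : ℝ := max 1 ((deriv v 0 / v 0 + 1) / a) with hT0
  have hQneg : ∀ s : ℝ, T0 ≤ s → deriv v s / v s ≤ -1 := by
    intro s hs
    have hs0 : (0:ℝ) ≤ s := le_trans (le_trans zero_le_one (le_max_left _ _)) hs
    have h2 : (deriv v 0 / v 0 + 1) / a ≤ s := le_trans (le_max_right _ _) hs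
    have h3 : deriv v 0 / v 0 + 1 ≤ a * s := by
      rw [div_le_iff₀ ha0] at h2; linarith
    linarith [hQdecay s hs0]
  have hdvneg : ∀ s : ℝ, T0 ≤ s → deriv v s ≤ -v s := by
    intro s hs
    have h4 := hQneg s hs
    have hvs := hpos s
    rw [div_le_iff₀ hvs] at h4
    linarith
  -- log v decays, so v eventually < 1
  have hlog : ∀ s : ℝ, T0 ≤ s → Real.log (v s) ≤ Real.log (v T0) - (s - T0) := by
    intro s hs
    have hanti : AntitoneOn (fun y => Real.log (v y) + y) (Set.Ici T0) := by
      apply antitoneOn_of_deriv_nonpos (convex_Ici T0)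
      · exact ((hv1.continuous.continuousOn.log (fun y _ => (hpos y).ne')).add
          continuousOn_id)
      · intro y _
        have hid : HasDerivAt (fun y : ℝ => y) 1 y := by simpa using hasDerivAt_id' y
        exact (((hv1 y).hasDerivAt.log (hpos y).ne').add
          hid).differentiableAt.differentiableWithinAt
      · intro y hy
        rw [interior_Ici] at hy
        have hid : HasDerivAt (fun y : ℝ => y) 1 y := by simpa using hasDerivAt_id' y
        erw [(((hv1 y).hasDerivAt.log (hpos y).ne').add hid).deriv]
        linarith [hQneg y (le_of_lt hy)]
    have h5 : Real.log (v s) + s ≤ Real.log (v T0) + T0 :=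
      hanti Set.self_mem_Ici (Set.mem_Ici.mpr hs) hs
    linarith
  obtain ⟨t1, ht1⟩ : ∃ x : ℝ, x = T0 + |Real.log (v T0)| + 1 := ⟨_, rfl⟩
  have ht1T0 : T0 ≤ t1 := by
    have := abs_nonneg (Real.log (v T0))
    rw [ht1]; linarith
  have hvt1 : v t1 < 1 := by
    have hl := hlog t1 ht1T0
    have habs := le_abs_self (Real.log (v T0))
    have hdiff : t1 - T0 = |Real.log (v T0)| + 1 := by rw [ht1]; ring
    have hneg : Real.log (v t1) < 0 := by linarith
    exact (Real.log_neg_iff (hpos t1)).mp hneg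
  -- v is antitone past T0
  have hvanti : AntitoneOn v (Set.Ici T0) := by
    apply antitoneOn_of_deriv_nonpos (convex_Ici T0) hv1.continuous.continuousOn
      hv1.differentiableOn
    intro y hy
    rw [interior_Ici] at hy
    linarith [hdvneg y (le_of_lt hy), hpos y]
  -- past t1, v < 1 and v' ≤ -sqrt E0
  have hsqrtpos : 0 < Real.sqrt E0 := Real.sqrt_pos.mpr hcon
  have hdvle : ∀ s : ℝ, t1 ≤ s → deriv v s ≤ -Real.sqrt E0 := by
    intro s hs
    have hvs1 : v s < 1 := lt_of_le_of_lt
      (hvanti (Set.mem_Ici.mpr ht1T0) (Set.mem_Ici.mpr (ht1T0.trans hs)) hs) hvt1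
    have hvs := hpos s
    have hq2 : (2:ℝ) ≤ q := by
      rw [hq, le_div_iff₀ hd]; linarith
    have hvq : v s ^ q ≤ v s ^ 2 := by
      have h2 : v s ^ (2:ℝ) = v s ^ (2:ℕ) := by
        rw [← Real.rpow_natCast (v s) 2]; norm_num
      calc v s ^ q ≤ v s ^ (2:ℝ) := Real.rpow_le_rpow_of_exponent_ge hvs hvs1.le hq2
        _ = v s ^ (2:ℕ) := h2
    have hEs := hconst s
    have hc0 : 0 < c := by rw [hc]; positivity
    have hsq : E0 ≤ deriv v s ^ 2 := by nlinarith [hvq, hEs]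
    have habs : Real.sqrt E0 ≤ |deriv v s| := by
      rw [← Real.sqrt_sq_eq_abs]
      exact Real.sqrt_le_sqrt hsq
    have hneg : deriv v s ≤ -v s := hdvneg s (ht1T0.trans hs)
    have habs2 : |deriv v s| = -deriv v s := abs_of_neg (by linarith [hpos s])
    linarith [habs2 ▸ habs]
  -- v goes below zero: contradiction
  have hG : AntitoneOn (fun y => v y + Real.sqrt E0 * y) (Set.Ici t1) := by
    apply antitoneOn_of_deriv_nonpos (convex_Ici t1)
    · exact hv1.continuous.continuousOn.add (continuous_const.mul continuous_id).continuousOn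
    · intro y _
      exact ((hv1 y).hasDerivAt.add (hlin (Real.sqrt E0) y)).differentiableAt.differentiableWithinAt
    · intro y hy
      rw [interior_Ici] at hy
      erw [((hv1 y).hasDerivAt.add (hlin (Real.sqrt E0) y)).deriv]
      linarith [hdvle y (le_of_lt hy)]
  obtain ⟨t2, ht2⟩ : ∃ x : ℝ, x = t1 + (v t1 + 1) / Real.sqrt E0 := ⟨_, rfl⟩
  have ht2t1 : t1 ≤ t2 := by
    have h6 : 0 ≤ (v t1 + 1) / Real.sqrt E0 :=
      div_nonneg (by linarith [hpos t1]) hsqrtpos.le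
    rw [ht2]; linarith
  have h7 : v t2 + Real.sqrt E0 * t2 ≤ v t1 + Real.sqrt E0 * t1 :=
    hG Set.self_mem_Ici (Set.mem_Ici.mpr ht2t1) ht2t1
  have hmul : Real.sqrt E0 * (t2 - t1) = v t1 + 1 := by
    rw [ht2]
    field_simp
    ring
  have hv2neg : v t2 ≤ -1 := by nlinarith [h7, hmul]
  linarith [hpos t2]
end

section
/- Let v_ε be the Delaunay solution with minimum value ε attained at t = 0 (so v_ε(0) = ε, v_ε'(0) = 0, v_ε''(0) > 0). Then for all t ∈ ℝ, ε ≤ v_ε(t) ≤ ε cosh(((N-2)/2) t). -/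
set_option maxHeartbeats 2000000


/-- The Delaunay solution `v_ε` (the bounded positive solution of the Delaunay ODE
with `v(0) = ε`, `v'(0) = 0`, `v''(0) > 0`) satisfies
`ε ≤ v_ε(t) ≤ ε cosh(((N-2)/2) t)` for all `t ∈ ℝ`. -/
theorem delaunay_bounds (N : ℕ) (hN : 3 ≤ N) (ε : ℝ)
    (hε : 0 < ε) (hε' : ε < (((N : ℝ) - 2) / (N : ℝ)) ^ (((N : ℝ) - 2) / 4))
    (v : ℝ → ℝ) (hv : ContDiff ℝ 2 v) (hpos : ∀ t, 0 < v t)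
    (hbdd : ∃ M : ℝ, ∀ t, v t ≤ M)
    (hode : ∀ t, deriv (deriv v) t - (((N : ℝ) - 2) ^ 2 / 4) * v t
      + ((N : ℝ) * ((N : ℝ) - 2) / 4) * v t ^ (((N : ℝ) + 2) / ((N : ℝ) - 2)) = 0)
    (h0 : v 0 = ε) (h0' : deriv v 0 = 0) (h0'' : 0 < deriv (deriv v) 0) :
    ∀ t : ℝ, ε ≤ v t ∧ v t ≤ ε * Real.cosh (((N : ℝ) - 2) / 2 * t) := by
  have hn3 : (3:ℝ) ≤ (N:ℝ) := by exact_mod_cast hN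
  set n : ℝ := (N:ℝ) with hn
  have hn2 : (1:ℝ) ≤ n - 2 := by linarith
  set c : ℝ := (n - 2) / 2 with hc
  have hcpos : 0 < c := by rw [hc]; linarith
  set q : ℝ := (n + 2) / (n - 2) with hq
  set b : ℝ := n * (n - 2) / 4 with hb
  have hbpos : 0 < b := by rw [hb]; positivity
  -- differentiability
  have hv1 : Differentiable ℝ v := hv.differentiable (by norm_num)
  have hv2 : Differentiable ℝ (deriv v) := by
    have h2 : ContDiff ℝ (1+1) v := by
      have : ((1:WithTop ℕ∞)+1) = 2 := by norm_num
      rw [this]; exact hv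
    rw [contDiff_succ_iff_deriv] at h2
    exact h2.2.2.differentiable (by norm_num)
  have hODE : ∀ s, deriv (deriv v) s = c^2 * v s - b * v s ^ q := by
    intro s
    have h := hode s
    have hcq : (n - 2)^2/4 = c^2 := by rw [hc]; ring
    rw [hcq] at h; linarith
  -- basic HasDerivAt facts
  have hvd : ∀ s : ℝ, HasDerivAt v (deriv v s) s := fun s => (hv1 s).hasDerivAt
  have hvd2 : ∀ s : ℝ, HasDerivAt (deriv v) (deriv (deriv v) s) s := fun s => (hv2 s).hasDerivAt
  have hcosh : ∀ s : ℝ, HasDerivAt (fun r => ε * Real.cosh (c*r)) (ε * c * Real.sinh (c*s)) s := by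
    intro s
    have h1 : HasDerivAt (fun r : ℝ => c * r) c s := by
      simpa using (hasDerivAt_id s).const_mul c
    have := (Real.hasDerivAt_cosh (c*s)).comp s h1
    have := this.const_mul ε
    exact this.congr_deriv (by ring)
  have hsinh : ∀ s : ℝ, HasDerivAt (fun r => ε * c * Real.sinh (c*r)) (ε * c^2 * Real.cosh (c*s)) s := by
    intro s
    have h1 : HasDerivAt (fun r : ℝ => c * r) c s := by
      simpa using (hasDerivAt_id s).const_mul c
    have := (Real.hasDerivAt_sinh (c*s)).comp s h1
    have := this.const_mul (ε * c)
    exact this.congr_deriv (by ring)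
  -- w  = u - v, y = w' + c w
  set w : ℝ → ℝ := fun r => ε * Real.cosh (c*r) - v r with hwdef
  set y : ℝ → ℝ := fun r => (ε * c * Real.sinh (c*r) - deriv v r) + c * w r with hydef
  have hwd : ∀ s, HasDerivAt w (ε * c * Real.sinh (c*s) - deriv v s) s :=
    fun s => (hcosh s).sub (hvd s)
  have hyd : ∀ s, HasDerivAt y (ε * c^2 * Real.cosh (c*s) - deriv (deriv v) s
      + c * (ε * c * Real.sinh (c*s) - deriv v s)) s :=
    fun s => ((hsinh s).sub (hvd2 s)).add ((hwd s).const_mul c)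
  have hy0 : y 0 = 0 := by
    simp only [hydef, hwdef, h0, h0']
    simp [Real.sinh_zero, Real.cosh_zero]
  -- g = exp(-(c t)) y, g' = exp(-(c t)) b v^q > 0
  set g : ℝ → ℝ := fun r => Real.exp (-(c*r)) * y r with hgdef
  have hgd : ∀ s, HasDerivAt g (Real.exp (-(c*s)) * (b * v s ^ q)) s := by
    intro s
    have h1 : HasDerivAt (fun r : ℝ => -(c * r)) (-c) s := by
      exact (((hasDerivAt_id s).const_mul c).neg).congr_deriv (by ring)
    have he : HasDerivAt (fun r => Real.exp (-(c*r))) (Real.exp (-(c*s)) * (-c)) s := h1.exp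
    have := he.mul (hyd s)
    refine this.congr_deriv ?_
    have hode2 := hODE s
    simp only [hydef, hwdef]
    rw [hode2]; ring
  have hgmono : StrictMono g := by
    apply strictMono_of_deriv_pos
    intro s
    rw [(hgd s).deriv]
    have : (0:ℝ) < v s ^ q := Real.rpow_pos_of_pos (hpos s) q
    positivity
  have hg0 : g 0 = 0 := by simp [hgdef, hy0]
  have hysign : ∀ s : ℝ, 0 < s → 0 < y s := by
    intro s hs
    have := hgmono hs
    rw [hg0] at this
    have he : (0:ℝ) < Real.exp (-(c*s)) := Real.exp_pos _
    by_contra hcon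
    push_neg at hcon
    have : Real.exp (-(c*s)) * y s ≤ 0 := mul_nonpos_of_nonneg_of_nonpos he.le hcon
    simp only [hgdef] at *
    linarith
  have hysign' : ∀ s : ℝ, s < 0 → y s < 0 := by
    intro s hs
    have := hgmono hs
    rw [hg0] at this
    have he : (0:ℝ) < Real.exp (-(c*s)) := Real.exp_pos _
    by_contra hcon
    push_neg at hcon
    have : (0:ℝ) ≤ Real.exp (-(c*s)) * y s := mul_nonneg he.le hcon
    simp only [hgdef] at *
    linarith
  -- G = exp(c t) * w, G' = exp(c t) * y
  set G : ℝ → ℝ := fun r => Real.exp (c*r) * w r with hGdef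
  have hGd : ∀ s, HasDerivAt G (Real.exp (c*s) * y s) s := by
    intro s
    have h1 : HasDerivAt (fun r : ℝ => c * r) c s := by
      simpa using (hasDerivAt_id s).const_mul c
    have he : HasDerivAt (fun r => Real.exp (c*r)) (Real.exp (c*s) * c) s := h1.exp
    have := he.mul (hwd s)
    refine this.congr_deriv ?_
    simp only [hydef]; ring
  have hG0 : G 0 = 0 := by simp [hGdef, hwdef, h0]
  have hupper : ∀ s : ℝ, 0 ≤ w s := by
    intro s
    have hGs : 0 ≤ G s := by
      rcases lt_trichotomy s 0 with hs | hs | hs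
      · have hanti : StrictAntiOn G (Set.Iic 0) := by
          apply strictAntiOn_of_deriv_neg (convex_Iic 0)
          · exact fun x _ => ((hGd x).differentiableAt.continuousAt).continuousWithinAt
          · intro x hx
            rw [interior_Iic] at hx
            rw [(hGd x).deriv]
            exact mul_neg_of_pos_of_neg (Real.exp_pos _) (hysign' x hx)
        have := hanti (Set.mem_Iic.mpr hs.le) (Set.mem_Iic.mpr le_rfl) hs
        rw [hG0] at this; linarith
      · rw [hs, hG0]
      · have hmono : StrictMonoOn G (Set.Ici 0) := by
          apply strictMonoOn_of_deriv_pos (convex_Ici 0)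
          · exact fun x _ => ((hGd x).differentiableAt.continuousAt).continuousWithinAt
          · intro x hx
            rw [interior_Ici] at hx
            rw [(hGd x).deriv]
            exact mul_pos (Real.exp_pos _) (hysign x hx)
        have := hmono (Set.mem_Ici.mpr le_rfl) (Set.mem_Ici.mpr hs.le) hs
        rw [hG0] at this; linarith
    have he : (0:ℝ) < Real.exp (c*s) := Real.exp_pos _
    by_contra hcon
    push_neg at hcon
    have : Real.exp (c*s) * w s < 0 := mul_neg_of_pos_of_neg he hcon
    simp only [hGdef] at hGs
    linarith
  -- Energy conservation for the lower bound
  set p : ℝ := 2 * n / (n - 2) with hp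
  have hp1 : (1:ℝ) ≤ p := by
    rw [hp, le_div_iff₀ (by linarith : (0:ℝ) < n - 2)]; linarith
  have hpq : p - 1 = q := by
    rw [hp, hq]; field_simp; ring
  have hbq : c^2/2 * p = b := by
    rw [hc, hp, hb]; field_simp; ring
  set E : ℝ → ℝ := fun r => (deriv v r)^2/2 - c^2/2 * (v r)^2 + c^2/2 * (v r) ^ p with hEdef
  have hEd : ∀ s, HasDerivAt E 0 s := by
    intro s
    have h1 : HasDerivAt (fun r => (deriv v r)^2/2) (deriv v s * deriv (deriv v) s) s := by
      have := ((hvd2 s).pow 2).div_const 2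
      refine this.congr_deriv ?_; push_cast; ring
    have h2 : HasDerivAt (fun r => c^2/2 * (v r)^2) (c^2 * v s * deriv v s) s := by
      have := ((hvd s).pow 2).const_mul (c^2/2)
      refine this.congr_deriv ?_; push_cast; ring
    have h3 : HasDerivAt (fun r => c^2/2 * (v r) ^ p) (b * v s ^ q * deriv v s) s := by
      have hr : HasDerivAt (fun r => v r ^ p) (deriv v s * p * v s ^ (p-1)) s :=
        (hvd s).rpow_const (p := p) (Or.inl (hpos s).ne')
      have := hr.const_mul (c^2/2)
      refine this.congr_deriv ?_
      rw [hpq, ← hbq]; ring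
    have := (h1.sub h2).add h3
    refine this.congr_deriv ?_
    rw [hODE s]; ring
  have hEconst : ∀ s : ℝ, E s = E 0 :=
    fun s => is_const_of_deriv_eq_zero (fun x => (hEd x).differentiableAt)
      (fun x => (hEd x).deriv) s 0
  have hE0 : E 0 = -(c^2/2) * ε^2 + c^2/2 * ε ^ p := by
    simp only [hEdef, h0, h0']
    ring
  have hlower : ∀ s : ℝ, ε ≤ v s := by
    intro s
    by_contra hcon
    push_neg at hcon
    -- energy inequality : (v s)^p - (v s)^2 ≤ ε^p - ε^2
    have hEs := hEconst s
    rw [hE0] at hEs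
    have hsq : (0:ℝ) ≤ (deriv v s)^2/2 := by positivity
    have hkey : (v s) ^ p - (v s)^2 ≤ ε ^ p - ε^2 := by
      have hc2 : (0:ℝ) < c^2/2 := by positivity
      simp only [hEdef] at hEs
      have h1 : c^2/2 * ((v s) ^ p - (v s)^2) ≤ c^2/2 * (ε ^ p - ε^2) := by
        linarith [hEs, hsq]
      exact (mul_le_mul_iff_right₀ hc2).mp h1
    -- strict antitonicity of x ^ p - x^2 on (0, xstar]
    set xstar : ℝ := ((n-2)/n) ^ ((n-2)/4) with hxs
    have hxspos : 0 < xstar := Real.rpow_pos_of_pos (by positivity) _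
    have hanti : StrictAntiOn (fun x : ℝ => x ^ p - x^2) (Set.Ioc 0 xstar) := by
      apply strictAntiOn_of_deriv_neg (convex_Ioc 0 xstar)
      · apply ContinuousOn.sub
        · intro x hx
          exact (Real.continuousAt_rpow_const x p (Or.inl hx.1.ne')).continuousWithinAt
        · fun_prop
      · intro x hx
        rw [interior_Ioc] at hx
        obtain ⟨hx0, hx1⟩ := hx
        have hd : HasDerivAt (fun x : ℝ => x ^ p - x^2) (1 * p * x ^ (p-1) - 2*x) x :=
          ((hasDerivAt_id x).rpow_const (Or.inl hx0.ne')).sub ((hasDerivAt_pow 2 x).congr_deriv (by norm_num))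
        rw [hd.deriv]
        have hsplit : x ^ (p - 1) = x ^ (p - 2) * x := by
          rw [show p - 1 = (p-2) + 1 by ring, Real.rpow_add hx0, Real.rpow_one]
        have hd1 : (0:ℝ) < n - 2 := by linarith
        have hd0 : (0:ℝ) < n := by linarith
        have hexp : (0:ℝ) < p - 2 := by
          have : (2:ℝ) < p := by
            rw [hp, lt_div_iff₀ hd1]; linarith
          linarith
        have hxlt : x ^ (p-2) < xstar ^ (p-2) :=
          Real.rpow_lt_rpow hx0.le hx1 hexp
        have hxstar : xstar ^ (p-2) = (n-2)/n := by
          rw [hxs, ← Real.rpow_mul (div_nonneg hd1.le hd0.le)]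
          have he1 : (n-2)/4 * (p-2) = 1 := by
            rw [hp]; field_simp; ring
          rw [he1, Real.rpow_one]
        have hppos : (0:ℝ) < p := by linarith
        have hp2 : p * ((n-2)/n) = 2 := by
          rw [hp]; field_simp
        have hplt : p * x ^ (p-2) < 2 := by
          have h2 : p * x^(p-2) < p * ((n-2)/n) := by
            apply mul_lt_mul_of_pos_left _ hppos
            rw [← hxstar]; exact hxlt
          linarith
        rw [hsplit]
        have hfin : p * x^(p-2) * x < 2 * x := mul_lt_mul_of_pos_right hplt hx0
        linarith [hfin]
    have hvmem : v s ∈ Set.Ioc 0 xstar := ⟨hpos s, le_of_lt (lt_trans hcon hε')⟩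
    have hεmem : ε ∈ Set.Ioc 0 xstar := ⟨hε, le_of_lt hε'⟩
    have := hanti hvmem hεmem hcon
    simp only at this
    linarith
  intro t
  exact ⟨hlower t, by have := hupper t; simp only [hwdef] at this; linarith⟩
end

section
/- If a positive C² function w satisfies w(0) = ε, w'(0) = 0, and (w')^2 ≤ ((N-2)^2/4)(w^2 - ε^2) for all t ≥ 0, then w(t) ≤ ε cosh(((N-2)/2) t) for all t ≥ 0. -/
/-- If a C² function `w ≥ ε` satisfies `w(0) = ε`, `w'(0) = 0` and the differential
inequality `(w')² ≤ ((N-2)²/4)(w² - ε²)` on `[0,∞)`, then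
`w(t) ≤ ε cosh(((N-2)/2) t)` for all `t ≥ 0`. -/
theorem cosh_comparison (N : ℕ) (hN : 3 ≤ N) (ε : ℝ) (hε : 0 < ε)
    (w : ℝ → ℝ) (hw : ContDiff ℝ 2 w) (hge : ∀ t, 0 ≤ t → ε ≤ w t)
    (h0 : w 0 = ε) (h0' : deriv w 0 = 0)
    (hineq : ∀ t, 0 ≤ t →
      (deriv w t) ^ 2 ≤ (((N : ℝ) - 2) ^ 2 / 4) * (w t ^ 2 - ε ^ 2)) :
    ∀ t, 0 ≤ t → w t ≤ ε * Real.cosh (((N : ℝ) - 2) / 2 * t) := by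
  intro t ht
  set c : ℝ := ((N : ℝ) - 2) / 2 with hc_def
  have hc : 0 < c := by
    have : (3 : ℝ) ≤ (N : ℝ) := by exact_mod_cast hN
    simp only [hc_def]; linarith
  have hwdiff : Differentiable ℝ w := hw.differentiable (by norm_num)
  have key : ∀ δ : ℝ, 0 < δ → w t ≤ ε * Real.cosh ((c + δ) * t + δ) := by
    intro δ hδ
    set B : ℝ → ℝ := fun x => ε * Real.cosh ((c + δ) * x + δ) with hB_def
    set B' : ℝ → ℝ := fun x => ε * (Real.sinh ((c + δ) * x + δ) * (c + δ)) with hB'_def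
    have hB : ∀ x, HasDerivAt B (B' x) x := by
      intro x
      have h1 : HasDerivAt (fun x : ℝ => (c + δ) * x + δ) (c + δ) x := by
        simpa using ((hasDerivAt_id x).const_mul (c + δ)).add_const δ
      have h2 : HasDerivAt (fun x : ℝ => Real.cosh ((c + δ) * x + δ))
          (Real.sinh ((c + δ) * x + δ) * (c + δ)) x :=
        (Real.hasDerivAt_cosh _).comp x h1
      simpa [hB'_def] using h2.const_mul ε
    have main : ∀ ⦃x⦄, x ∈ Set.Icc 0 t → w x ≤ B x := by
      apply image_le_of_deriv_right_lt_deriv_boundary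
        (f' := deriv w) (B := B) (B' := B')
      · exact hwdiff.continuous.continuousOn
      · intro x _
        exact (hwdiff x).hasDerivAt.hasDerivWithinAt
      · have h1 : (1 : ℝ) ≤ Real.cosh ((c + δ) * 0 + δ) := Real.one_le_cosh _
        have : ε * 1 ≤ ε * Real.cosh ((c + δ) * 0 + δ) :=
          mul_le_mul_of_nonneg_left h1 hε.le
        simpa [hB_def, h0] using this
      · exact hB
      · intro x hx hwx
        obtain ⟨hx0, _⟩ := hx
        have hs : 0 < (c + δ) * x + δ := by positivity
        have hsinh : 0 < Real.sinh ((c + δ) * x + δ) := Real.sinh_pos_iff.mpr hs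
        have hB'pos : 0 < B' x := by
          simp only [hB'_def]; positivity
        have hsq : (deriv w x) ^ 2 < (B' x) ^ 2 := by
          have h1 := hineq x hx0
          have h2 : (((N : ℝ) - 2) ^ 2 / 4) = c ^ 2 := by
            simp only [hc_def]; ring
          have h3 : w x ^ 2 - ε ^ 2
              = ε ^ 2 * Real.sinh ((c + δ) * x + δ) ^ 2 := by
            rw [hwx]
            have := Real.cosh_sq ((c + δ) * x + δ)
            simp only [hB_def]
            nlinarith [this]
          have h4 : c ^ 2 * (ε ^ 2 * Real.sinh ((c + δ) * x + δ) ^ 2)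
              < (B' x) ^ 2 := by
            simp only [hB'_def]
            have hcc : c ^ 2 < (c + δ) ^ 2 := by nlinarith
            have hpos : 0 < ε ^ 2 * Real.sinh ((c + δ) * x + δ) ^ 2 := by positivity
            nlinarith [mul_lt_mul_of_pos_right hcc hpos]
          calc (deriv w x) ^ 2 ≤ (((N : ℝ) - 2) ^ 2 / 4) * (w x ^ 2 - ε ^ 2) := h1
            _ = c ^ 2 * (ε ^ 2 * Real.sinh ((c + δ) * x + δ) ^ 2) := by rw [h2, h3]
            _ < (B' x) ^ 2 := h4
        exact lt_of_pow_lt_pow_left₀ 2 hB'pos.le hsq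
    exact main (Set.right_mem_Icc.mpr ht)
  -- take the limit δ → 0⁺
  have hlim : Filter.Tendsto (fun δ : ℝ => ε * Real.cosh ((c + δ) * t + δ))
      (nhdsWithin 0 (Set.Ioi 0)) (nhds (ε * Real.cosh (c * t))) := by
    have hcont : Continuous (fun δ : ℝ => ε * Real.cosh ((c + δ) * t + δ)) :=
      continuous_const.mul (Real.continuous_cosh.comp
        (((continuous_const.add continuous_id).mul continuous_const).add continuous_id))
    have := hcont.tendsto 0
    simp only [add_zero, zero_mul] at this
    exact this.mono_left nhdsWithin_le_nhds
  exact ge_of_tendsto hlim (Filter.eventually_of_mem self_mem_nhdsWithin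
    fun δ hδ => key δ hδ)
end

section
/- For t ≥ 0 the Delaunay solution satisfies the integral representation v_ε(t) = ε cosh(((N-2)/2) t) - (N(N-2)/4) e^{((N-2)/2) t} ∫₀ᵗ e^{(2-N)s} ∫₀ˢ e^{((N-2)/2) z} v_ε(z)^{(N+2)/(N-2)} dz ds, and consequently 0 ≤ ε cosh(((N-2)/2) t) - v_ε(t) ≤ ((N-2)/8) ε^{(N+2)/(N-2)} e^{((N+2)/2) t}. -/
open intervalIntegral

/-- For `t ≥ 0`, the Delaunay solution satisfies the integral representation
`v_ε(t) = ε cosh(((N-2)/2)t) - (N(N-2)/4) e^{((N-2)/2)t} ∫₀ᵗ e^{(2-N)s} ∫₀ˢ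
e^{((N-2)/2)z} v_ε(z)^{(N+2)/(N-2)} dz ds`, and consequently
`0 ≤ ε cosh(((N-2)/2)t) - v_ε(t) ≤ ((N-2)/8) ε^{(N+2)/(N-2)} e^{((N+2)/2)t}`. -/
theorem delaunay_integral_representation (N : ℕ) (hN : 3 ≤ N) (ε : ℝ)
    (hε : 0 < ε) (hε' : ε < (((N : ℝ) - 2) / (N : ℝ)) ^ (((N : ℝ) - 2) / 4))
    (v : ℝ → ℝ) (hv : ContDiff ℝ 2 v)
    (hlow : ∀ t, ε ≤ v t)
    (hupp : ∀ t, v t ≤ ε * Real.cosh (((N : ℝ) - 2) / 2 * t))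
    (hode : ∀ t, deriv (deriv v) t - (((N : ℝ) - 2) ^ 2 / 4) * v t
      + ((N : ℝ) * ((N : ℝ) - 2) / 4) * v t ^ (((N : ℝ) + 2) / ((N : ℝ) - 2)) = 0)
    (h0 : v 0 = ε) (h0' : deriv v 0 = 0) :
    ∀ t : ℝ, 0 ≤ t →
      (v t = ε * Real.cosh (((N : ℝ) - 2) / 2 * t)
        - ((N : ℝ) * ((N : ℝ) - 2) / 4) * Real.exp (((N : ℝ) - 2) / 2 * t) *
          ∫ s in (0 : ℝ)..t, Real.exp ((2 - (N : ℝ)) * s) *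
            ∫ z in (0 : ℝ)..s,
              Real.exp (((N : ℝ) - 2) / 2 * z) * v z ^ (((N : ℝ) + 2) / ((N : ℝ) - 2)))
      ∧ 0 ≤ ε * Real.cosh (((N : ℝ) - 2) / 2 * t) - v t
      ∧ ε * Real.cosh (((N : ℝ) - 2) / 2 * t) - v t
          ≤ (((N : ℝ) - 2) / 8) * ε ^ (((N : ℝ) + 2) / ((N : ℝ) - 2)) *
            Real.exp (((N : ℝ) + 2) / 2 * t) := by
  have hN3 : (3:ℝ) ≤ (N:ℝ) := by exact_mod_cast hN
  have hNe : (N:ℝ) - 2 ≠ 0 := by linarith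
  have hN0 : (0:ℝ) < (N:ℝ) := by linarith
  set a : ℝ := ((N:ℝ) - 2) / 2 with ha_def
  set p : ℝ := ((N:ℝ) + 2) / ((N:ℝ) - 2) with hp_def
  set c : ℝ := (N:ℝ) * ((N:ℝ) - 2) / 4 with hc_def
  have ha : 0 < a := by rw [ha_def]; linarith
  have hp0 : 0 < p := by rw [hp_def]; apply div_pos <;> linarith
  have hc0 : 0 < c := by rw [hc_def]; apply div_pos; · nlinarith
                         · norm_num
  have hvpos : ∀ t, 0 < v t := fun t => lt_of_lt_of_le hε (hlow t)
  have hvc : Continuous v := hv.continuous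
  -- derivative of exponentials
  have hexp : ∀ (k t : ℝ), HasDerivAt (fun u => Real.exp (k * u)) (k * Real.exp (k * t)) t := by
    intro k t
    have := (Real.hasDerivAt_exp (k*t)).comp t ((hasDerivAt_id t).const_mul k)
    exact this.congr_deriv (by ring)
  -- the inner integrand
  set f : ℝ → ℝ := fun z => Real.exp (a * z) * v z ^ p with hf_def
  have hfc : Continuous f := by
    rw [hf_def]
    exact (Real.continuous_exp.comp (continuous_const.mul continuous_id)).mul
      (hvc.rpow_const fun x => Or.inl (hvpos x).ne')
  set G : ℝ → ℝ := fun s => ∫ z in (0:ℝ)..s, f z with hG_def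
  have hGc : Continuous G :=
    intervalIntegral.continuous_primitive (fun a b => hfc.intervalIntegrable a b) 0
  have hG : ∀ s, HasDerivAt G (f s) s := fun s =>
    intervalIntegral.integral_hasDerivAt_right (hfc.intervalIntegrable _ _)
      hfc.stronglyMeasurable.stronglyMeasurableAtFilter hfc.continuousAt
  set g2 : ℝ → ℝ := fun s => Real.exp ((2 - (N:ℝ)) * s) * G s with hg2_def
  have hg2c : Continuous g2 := by
    rw [hg2_def]
    exact (Real.continuous_exp.comp (continuous_const.mul continuous_id)).mul hGc
  set F : ℝ → ℝ := fun t => ∫ s in (0:ℝ)..t, g2 s with hF_def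
  have hF : ∀ t, HasDerivAt F (g2 t) t := fun t =>
    intervalIntegral.integral_hasDerivAt_right (hg2c.intervalIntegrable _ _)
      hg2c.stronglyMeasurable.stronglyMeasurableAtFilter hg2c.continuousAt
  set w : ℝ → ℝ := fun t => Real.exp (a * t) * F t with hw_def
  have hexpC : ∀ t : ℝ, Real.exp (a*t) * Real.exp ((2 - (N:ℝ))*t) = Real.exp (-(a*t)) := by
    intro t
    rw [← Real.exp_add]
    congr 1
    rw [ha_def]; ring
  have hw : ∀ t, HasDerivAt w (a * w t + Real.exp (-(a*t)) * G t) t := by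
    intro t
    have h := (hexp a t).mul (hF t)
    have h2 : HasDerivAt w (a * Real.exp (a*t) * F t + Real.exp (a*t) * g2 t) t := by
      rw [hw_def]; exact h
    convert h2 using 1
    rw [hw_def, hg2_def]
    simp only
    rw [← hexpC t]
    ring
  set D : ℝ → ℝ := fun t => a * w t + Real.exp (-(a*t)) * G t with hD_def
  have hD : ∀ t, HasDerivAt D (a^2 * w t + v t ^ p) t := by
    intro t
    have h1 : HasDerivAt (fun u => a * w u) (a * (a * w t + Real.exp (-(a*t)) * G t)) t :=
      (hw t).const_mul a
    have he : HasDerivAt (fun u => Real.exp (-(a*u))) (-a * Real.exp (-(a*t))) t := by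
      have := hexp (-a) t
      simpa [neg_mul] using this
    have h2 := he.mul (hG t)
    have h3 : HasDerivAt D
        (a * (a * w t + Real.exp (-(a*t)) * G t)
          + (-a * Real.exp (-(a*t)) * G t + Real.exp (-(a*t)) * f t)) t := by
      rw [hD_def]; exact h1.add h2
    convert h3 using 1
    rw [hf_def]
    simp only
    rw [← mul_assoc (Real.exp (-(a*t))), ← Real.exp_add]
    simp
    ring
  -- regularity of v
  have hv2 : ContDiff ℝ (1+1 : ℕ) v := hv
  have hdv1 : ContDiff ℝ 1 (deriv v) := (contDiff_succ_iff_deriv.mp hv2).2.2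
  have hdv : Differentiable ℝ v := hv.differentiable two_ne_zero
  have hdv1' : Differentiable ℝ (deriv v) := hdv1.differentiable one_ne_zero
  have ha2 : a^2 = ((N:ℝ)-2)^2/4 := by rw [ha_def]; ring
  have hodeq : ∀ t, deriv (deriv v) t = a^2 * v t - c * v t ^ p := by
    intro t
    have h := hode t
    rw [ha2]
    linarith
  -- U and its derivative
  set U : ℝ → ℝ := fun t => v t - ε * Real.cosh (a*t) + c * w t with hU_def
  set U1 : ℝ → ℝ := fun t => deriv v t - ε * (a * Real.sinh (a*t)) + c * D t with hU1_def
  have hcoshd : ∀ t : ℝ, HasDerivAt (fun u => ε * Real.cosh (a*u)) (ε * (a * Real.sinh (a*t))) t := by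
    intro t
    have := ((Real.hasDerivAt_cosh (a*t)).comp t ((hasDerivAt_id t).const_mul a)).const_mul ε
    simpa [Function.comp, mul_comm, mul_assoc] using this
  have hsinhd : ∀ t : ℝ, HasDerivAt (fun u => ε * (a * Real.sinh (a*u)))
      (ε * (a * (a * Real.cosh (a*t)))) t := by
    intro t
    have := (((Real.hasDerivAt_sinh (a*t)).comp t ((hasDerivAt_id t).const_mul a)).const_mul a).const_mul ε
    refine this.congr_deriv ?_
    ring
  have hU : ∀ t, HasDerivAt U (U1 t) t := by
    intro t
    have h1 : HasDerivAt v (deriv v t) t := (hdv t).hasDerivAt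
    have h := (h1.sub (hcoshd t)).add ((hw t).const_mul c)
    have h2 : HasDerivAt U (deriv v t - ε * (a * Real.sinh (a*t))
        + c * (a * w t + Real.exp (-(a*t)) * G t)) t := by
      rw [hU_def]; exact h
    convert h2 using 1
  have hU1 : ∀ t, HasDerivAt U1 (a^2 * U t) t := by
    intro t
    have h1 : HasDerivAt (deriv v) (deriv (deriv v) t) t := (hdv1' t).hasDerivAt
    have h := (h1.sub (hsinhd t)).add ((hD t).const_mul c)
    have h2 : HasDerivAt U1 (deriv (deriv v) t - ε * (a * (a * Real.cosh (a*t)))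
        + c * (a^2 * w t + v t ^ p)) t := by
      rw [hU1_def]; exact h
    convert h2 using 1
    rw [hodeq t, hU_def]
    simp only
    ring
  -- U ≡ 0 via two first-order reductions
  have hU00 : U 0 = 0 := by
    rw [hU_def, hw_def, hF_def]
    simp [h0]
  have hU10 : U1 0 = 0 := by
    rw [hU1_def, hD_def, hw_def, hF_def, hG_def]
    simp [h0']
  have keyphi : ∀ t, U1 t = a * U t := by
    have hφd : ∀ t, HasDerivAt (fun u => Real.exp (a*u) * (U1 u - a * U u)) 0 t := by
      intro t
      have h := (hexp a t).mul ((hU1 t).sub ((hU t).const_mul a))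
      refine h.congr_deriv ?_
      simp only [Pi.sub_apply]
      ring
    intro t
    have hc2 := is_const_of_deriv_eq_zero (f := fun u => Real.exp (a*u) * (U1 u - a * U u))
      (fun u => (hφd u).differentiableAt) (fun u => (hφd u).deriv) t 0
    have h00 : Real.exp (a*0) * (U1 0 - a * U 0) = 0 := by rw [hU00, hU10]; ring
    rw [h00] at hc2
    rcases mul_eq_zero.mp hc2 with h | h
    · exact absurd h (Real.exp_pos _).ne'
    · linarith
  have hUzero : ∀ t, U t = 0 := by
    have hψd : ∀ t, HasDerivAt (fun u => Real.exp (-(a*u)) * U u) 0 t := by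
      intro t
      have he : HasDerivAt (fun u => Real.exp (-(a*u))) (-a * Real.exp (-(a*t))) t := by
        have := hexp (-a) t
        simpa [neg_mul] using this
      have h := he.mul (hU t)
      refine h.congr_deriv ?_
      rw [keyphi t]
      ring
    intro t
    have hc2 := is_const_of_deriv_eq_zero (f := fun u => Real.exp (-(a*u)) * U u)
      (fun u => (hψd u).differentiableAt) (fun u => (hψd u).deriv) t 0
    have h00 : Real.exp (-(a*0)) * U 0 = 0 := by rw [hU00]; ring
    rw [h00] at hc2
    rcases mul_eq_zero.mp hc2 with h | h
    · exact absurd h (Real.exp_pos _).ne'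
    · exact h
  have hrep : ∀ t, v t = ε * Real.cosh (a*t) - c * (Real.exp (a*t) * F t) := by
    intro t
    have := hUzero t
    rw [hU_def] at this
    simp only at this
    rw [hw_def] at this
    simp only at this
    linarith
  -- the pointwise bound on f for nonneg arguments
  have hcosh_le : ∀ x : ℝ, 0 ≤ x → Real.cosh x ≤ Real.exp x := by
    intro x hx
    rw [Real.cosh_eq]
    have : Real.exp (-x) ≤ Real.exp x := Real.exp_le_exp.mpr (by linarith)
    linarith
  have hfb : ∀ z : ℝ, 0 ≤ z → f z ≤ ε ^ p * Real.exp ((N:ℝ) * z) := by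
    intro z hz
    have haz : 0 ≤ a * z := mul_nonneg ha.le hz
    have h1 : v z ≤ ε * Real.exp (a*z) := by
      have := mul_le_mul_of_nonneg_left (hcosh_le (a*z) haz) hε.le
      exact (hupp z).trans this
    have h2 : v z ^ p ≤ (ε * Real.exp (a*z)) ^ p :=
      Real.rpow_le_rpow (hvpos z).le h1 hp0.le
    have h3 : (ε * Real.exp (a*z)) ^ p = ε^p * Real.exp ((a*z)*p) := by
      rw [Real.mul_rpow hε.le (Real.exp_pos _).le, ← Real.exp_mul]
    have h4 : f z ≤ Real.exp (a*z) * (ε^p * Real.exp ((a*z)*p)) := by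
      rw [hf_def]
      simp only
      rw [← h3]
      exact mul_le_mul_of_nonneg_left h2 (Real.exp_pos _).le
    have h5 : a*z + (a*z)*p = (N:ℝ)*z := by
      rw [ha_def, hp_def]; field_simp; ring
    calc f z ≤ Real.exp (a*z) * (ε^p * Real.exp ((a*z)*p)) := h4
      _ = ε^p * (Real.exp (a*z) * Real.exp ((a*z)*p)) := by ring
      _ = ε^p * Real.exp ((N:ℝ)*z) := by rw [← Real.exp_add, h5]
  -- bound on G
  have hexpc : ∀ k : ℝ, Continuous (fun z : ℝ => ε^p * Real.exp (k * z)) :=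
    fun k => continuous_const.mul (Real.continuous_exp.comp (continuous_const.mul continuous_id))
  have hGb : ∀ s : ℝ, 0 ≤ s → G s ≤ ε^p / (N:ℝ) * Real.exp ((N:ℝ)*s) := by
    intro s hs
    have hanti : ∀ z : ℝ, HasDerivAt (fun u => ε^p/(N:ℝ) * Real.exp ((N:ℝ)*u))
        (ε^p * Real.exp ((N:ℝ)*z)) z := by
      intro z
      have := (hexp (N:ℝ) z).const_mul (ε^p/(N:ℝ))
      refine this.congr_deriv ?_
      field_simp
    have hcalc : (∫ z in (0:ℝ)..s, ε^p * Real.exp ((N:ℝ)*z))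
        = ε^p/(N:ℝ) * Real.exp ((N:ℝ)*s) - ε^p/(N:ℝ) * Real.exp ((N:ℝ)*0) :=
      intervalIntegral.integral_eq_sub_of_hasDerivAt (fun z _ => hanti z)
        ((hexpc (N:ℝ)).intervalIntegrable _ _)
    have hmono : G s ≤ ∫ z in (0:ℝ)..s, ε^p * Real.exp ((N:ℝ)*z) := by
      rw [hG_def]
      exact intervalIntegral.integral_mono_on hs (hfc.intervalIntegrable 0 s)
        ((hexpc (N:ℝ)).intervalIntegrable 0 s) (fun z hz => hfb z hz.1)
    have hpos : 0 ≤ ε^p/(N:ℝ) := by positivity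
    calc G s ≤ ε^p/(N:ℝ) * Real.exp ((N:ℝ)*s) - ε^p/(N:ℝ) * Real.exp ((N:ℝ)*0) := by
          rw [← hcalc]; exact hmono
      _ ≤ ε^p / (N:ℝ) * Real.exp ((N:ℝ)*s) := by
          have : 0 ≤ ε^p/(N:ℝ) * Real.exp ((N:ℝ)*0) := by positivity
          linarith
  -- main statement
  intro t ht
  refine ⟨?_, ?_, ?_⟩
  · have h := hrep t
    simp only [hF_def, hg2_def, hG_def, hf_def] at h ⊢
    rw [h]
    ring
  · have := hupp t
    linarith
  · -- bound F t
    have hg2b : ∀ s : ℝ, 0 ≤ s → g2 s ≤ ε^p/(N:ℝ) * Real.exp (2*s) := by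
      intro s hs
      have h1 := hGb s hs
      have h2 : Real.exp ((2 - (N:ℝ))*s) * (ε^p/(N:ℝ) * Real.exp ((N:ℝ)*s))
          = ε^p/(N:ℝ) * Real.exp (2*s) := by
        rw [mul_left_comm, ← Real.exp_add]
        congr 2
        ring
      rw [hg2_def]
      simp only
      calc Real.exp ((2 - (N:ℝ))*s) * G s
          ≤ Real.exp ((2 - (N:ℝ))*s) * (ε^p/(N:ℝ) * Real.exp ((N:ℝ)*s)) :=
            mul_le_mul_of_nonneg_left h1 (Real.exp_pos _).le
        _ = ε^p/(N:ℝ) * Real.exp (2*s) := h2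
    have hanti2 : ∀ z : ℝ, HasDerivAt (fun u => ε^p/(2*(N:ℝ)) * Real.exp (2*u))
        (ε^p/(N:ℝ) * Real.exp (2*z)) z := by
      intro z
      have := (hexp 2 z).const_mul (ε^p/(2*(N:ℝ)))
      refine this.congr_deriv ?_
      field_simp
    have hcont2 : Continuous (fun z : ℝ => ε^p/(N:ℝ) * Real.exp (2 * z)) :=
      continuous_const.mul (Real.continuous_exp.comp (continuous_const.mul continuous_id))
    have hcalc2 : (∫ s in (0:ℝ)..t, ε^p/(N:ℝ) * Real.exp (2*s))
        = ε^p/(2*(N:ℝ)) * Real.exp (2*t) - ε^p/(2*(N:ℝ)) * Real.exp (2*0) :=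
      intervalIntegral.integral_eq_sub_of_hasDerivAt (fun z _ => hanti2 z)
        (hcont2.intervalIntegrable _ _)
    have hFb : F t ≤ ε^p/(2*(N:ℝ)) * Real.exp (2*t) := by
      have hmono : F t ≤ ∫ s in (0:ℝ)..t, ε^p/(N:ℝ) * Real.exp (2*s) := by
        rw [hF_def]
        exact intervalIntegral.integral_mono_on ht (hg2c.intervalIntegrable 0 t)
          (hcont2.intervalIntegrable 0 t) (fun s hs => hg2b s hs.1)
      have : 0 ≤ ε^p/(2*(N:ℝ)) * Real.exp (2*0) := by positivity
      calc F t ≤ _ := hmono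
        _ = ε^p/(2*(N:ℝ)) * Real.exp (2*t) - ε^p/(2*(N:ℝ)) * Real.exp (2*0) := hcalc2
        _ ≤ ε^p/(2*(N:ℝ)) * Real.exp (2*t) := by linarith
    have heq : ε * Real.cosh (a*t) - v t = c * (Real.exp (a*t) * F t) := by
      have := hrep t; linarith
    rw [heq]
    have step : c * (Real.exp (a*t) * F t)
        ≤ c * (Real.exp (a*t) * (ε^p/(2*(N:ℝ)) * Real.exp (2*t))) := by
      apply mul_le_mul_of_nonneg_left _ hc0.le
      exact mul_le_mul_of_nonneg_left hFb (Real.exp_pos _).le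
    have hE : Real.exp (a*t) * Real.exp (2*t) = Real.exp (((N:ℝ)+2)/2 * t) := by
      rw [← Real.exp_add]
      congr 1
      rw [ha_def]; ring
    have hfinal : c * (Real.exp (a*t) * (ε^p/(2*(N:ℝ)) * Real.exp (2*t)))
        = ((N:ℝ)-2)/8 * ε^p * Real.exp (((N:ℝ)+2)/2 * t) := by
      have h8 : c * (ε^p/(2*(N:ℝ))) = ((N:ℝ)-2)/8 * ε^p := by
        rw [hc_def]; field_simp; ring
      calc c * (Real.exp (a*t) * (ε^p/(2*(N:ℝ)) * Real.exp (2*t)))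
          = c * (ε^p/(2*(N:ℝ))) * (Real.exp (a*t) * Real.exp (2*t)) := by ring
        _ = ((N:ℝ)-2)/8 * ε^p * Real.exp (((N:ℝ)+2)/2 * t) := by rw [h8, hE]
    linarith [step, hfinal.le]
end

section
/- For all t ≥ 0, the derivative of the Delaunay solution satisfies |v_ε'(t) - ((N-2)/2) ε sinh(((N-2)/2) t)| ≤ ((N²-4)/16) ε^{(N+2)/(N-2)} e^{((N+2)/2) t}. -/
open Real intervalIntegral

private lemma integral_exp_mul' (c t : ℝ) (hc : c ≠ 0) :
    ∫ s in (0:ℝ)..t, Real.exp (c * s) = (Real.exp (c * t) - 1) / c := by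
  have h : ∀ x ∈ Set.uIcc (0:ℝ) t,
      HasDerivAt (fun x => Real.exp (c * x) / c) (Real.exp (c * x)) x := by
    intro x _
    have h1 : HasDerivAt (fun x : ℝ => c * x) c x := by
      simpa using (hasDerivAt_id x).const_mul c
    have := h1.exp.div_const c
    simpa [mul_div_assoc, div_self hc] using this
  have hint : IntervalIntegrable (fun s => Real.exp (c * s)) MeasureTheory.volume 0 t :=
    (Real.continuous_exp.comp (continuous_const.mul continuous_id)).intervalIntegrable 0 t
  rw [intervalIntegral.integral_eq_sub_of_hasDerivAt h hint]
  simp [sub_div]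

set_option maxHeartbeats 1600000 in
/-- For `t ≥ 0`, the derivative of the Delaunay solution satisfies
`|v_ε'(t) - ((N-2)/2) ε sinh(((N-2)/2)t)| ≤ ((N²-4)/16) ε^{(N+2)/(N-2)} e^{((N+2)/2)t}`. -/
theorem delaunay_derivative_estimate (N : ℕ) (hN : 3 ≤ N) (ε : ℝ)
    (hε : 0 < ε) (hε' : ε < (((N : ℝ) - 2) / (N : ℝ)) ^ (((N : ℝ) - 2) / 4))
    (v : ℝ → ℝ) (hv : ContDiff ℝ 2 v)
    (hpos : ∀ t, 0 < v t)
    (hupp : ∀ t, v t ≤ ε * Real.cosh (((N : ℝ) - 2) / 2 * t))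
    (hode : ∀ t, deriv (deriv v) t - (((N : ℝ) - 2) ^ 2 / 4) * v t
      + ((N : ℝ) * ((N : ℝ) - 2) / 4) * v t ^ (((N : ℝ) + 2) / ((N : ℝ) - 2)) = 0)
    (h0 : v 0 = ε) (h0' : deriv v 0 = 0) :
    ∀ t : ℝ, 0 ≤ t →
      |deriv v t - (((N : ℝ) - 2) / 2) * ε * Real.sinh (((N : ℝ) - 2) / 2 * t)|
        ≤ (((N : ℝ) ^ 2 - 4) / 16) * ε ^ (((N : ℝ) + 2) / ((N : ℝ) - 2)) *
          Real.exp (((N : ℝ) + 2) / 2 * t) := by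
  have hN3 : (3:ℝ) ≤ (N:ℝ) := by exact_mod_cast hN
  have hN2 : (2:ℝ) < (N:ℝ) := by linarith
  set a : ℝ := ((N : ℝ) - 2) / 2 with ha_def
  set b : ℝ := ((N : ℝ) + 2) / 2 with hb_def
  set p : ℝ := ((N : ℝ) + 2) / ((N : ℝ) - 2) with hp_def
  set C : ℝ := (N : ℝ) * ((N : ℝ) - 2) / 4 with hC_def
  have haN : 0 < a := by rw [ha_def]; linarith
  have hbN : 0 < b := by rw [hb_def]; linarith
  have hCN : 0 < C := by rw [hC_def]; nlinarith
  have hpN : 0 < p := by rw [hp_def]; apply div_pos <;> linarith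
  have hNe : ((N:ℝ) - 2) ≠ 0 := by linarith
  have hap : a * p = b := by
    rw [ha_def, hp_def, hb_def]
    field_simp
  have hba : b - a = 2 := by rw [ha_def, hb_def]; ring
  have hbaN : b + a = (N:ℝ) := by rw [ha_def, hb_def]; ring
  -- regularity
  have hv2 : ContDiff ℝ ((1 : WithTop ℕ∞) + 1) v := by
    convert hv using 2
    exact one_add_one_eq_two
  have hder := (contDiff_succ_iff_deriv.mp hv2)
  have hdv : Differentiable ℝ v := hder.1
  have hcd1 : ContDiff ℝ 1 (deriv v) := by exact_mod_cast hder.2.2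
  have hddv : Differentiable ℝ (deriv v) := hcd1.differentiable one_ne_zero
  have hcontdd : Continuous (deriv (deriv v)) := (contDiff_one_iff_deriv.mp hcd1).2
  -- the forcing term
  set f : ℝ → ℝ := fun s => C * v s ^ p with hf_def
  have hfc : Continuous f := by
    apply continuous_const.mul
    exact hdv.continuous.rpow_const (fun s => Or.inr hpN.le)
  have hf_nonneg : ∀ s, 0 ≤ f s := fun s =>
    mul_nonneg hCN.le (Real.rpow_nonneg (hpos s).le p)
  -- second derivative from the ODE
  have hode' : ∀ t, deriv (deriv v) t = a ^ 2 * v t - f t := by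
    intro t
    have := hode t
    rw [hf_def, ha_def]
    nlinarith [this]
  -- w and u
  set w : ℝ → ℝ := fun t => deriv v t - a * ε * Real.sinh (a * t) with hw_def
  set u : ℝ → ℝ := fun t => v t - ε * Real.cosh (a * t) with hu_def
  have hw0 : w 0 = 0 := by simp [hw_def, h0']
  have hu0 : u 0 = 0 := by simp [hu_def, h0]
  have hu' : ∀ t, HasDerivAt u (w t) t := by
    intro t
    have h1 : HasDerivAt v (deriv v t) t := (hdv t).hasDerivAt
    have h2 : HasDerivAt (fun t : ℝ => a * t) a t := by
      simpa using (hasDerivAt_id t).const_mul a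
    have h3 := (h2.cosh).const_mul ε
    have := h1.sub h3
    refine this.congr_deriv ?_
    rw [hw_def]; ring
  have hw' : ∀ t, HasDerivAt w (a ^ 2 * u t - f t) t := by
    intro t
    have h1 : HasDerivAt (deriv v) (deriv (deriv v) t) t := (hddv t).hasDerivAt
    have h2 : HasDerivAt (fun t : ℝ => a * t) a t := by
      simpa using (hasDerivAt_id t).const_mul a
    have h3 := (h2.sinh).const_mul (a * ε)
    have := h1.sub h3
    refine this.congr_deriv ?_
    rw [hode' t, hu_def]; ring
  -- integrals
  set F₁ : ℝ → ℝ := fun t => ∫ s in (0:ℝ)..t, Real.exp (-(a * s)) * f s with hF1_def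
  set F₂ : ℝ → ℝ := fun t => ∫ s in (0:ℝ)..t, Real.exp (a * s) * f s with hF2_def
  have hc1 : Continuous fun s => Real.exp (-(a * s)) * f s :=
    (Real.continuous_exp.comp (continuous_const.mul continuous_id).neg).mul hfc
  have hc2 : Continuous fun s => Real.exp (a * s) * f s :=
    (Real.continuous_exp.comp (continuous_const.mul continuous_id)).mul hfc
  have hF1' : ∀ t, HasDerivAt F₁ (Real.exp (-(a * t)) * f t) t :=
    fun t => (hc1.integral_hasStrictDerivAt 0 t).hasDerivAt
  have hF2' : ∀ t, HasDerivAt F₂ (Real.exp (a * t) * f t) t :=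
    fun t => (hc2.integral_hasStrictDerivAt 0 t).hasDerivAt
  clear_value a b p C f w u F₁ F₂
  -- the two conserved quantities
  have key1 : ∀ t, Real.exp (-(a * t)) * (w t + a * u t) + F₁ t = 0 := by
    have hg' : ∀ t, HasDerivAt
        (fun t => Real.exp (-(a * t)) * (w t + a * u t) + F₁ t) 0 t := by
      intro t
      have he : HasDerivAt (fun t : ℝ => Real.exp (-(a * t))) (Real.exp (-(a * t)) * (-a)) t := by
        simpa using ((hasDerivAt_id t).const_mul a).neg.exp
      have hsum : HasDerivAt (fun t => w t + a * u t)
          ((a ^ 2 * u t - f t) + a * w t) t := (hw' t).add ((hu' t).const_mul a)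
      have := (he.mul hsum).add (hF1' t)
      refine this.congr_deriv ?_
      ring
    intro t
    have hconst := is_const_of_deriv_eq_zero (fun x => (hg' x).differentiableAt)
        (fun x => (hg' x).deriv) t 0
    simp only [hw0, hu0, Real.exp_zero, mul_zero, zero_add, add_zero, one_mul] at hconst
    rw [hconst, hF1_def]
    simp
  have key2 : ∀ t, Real.exp (a * t) * (w t - a * u t) + F₂ t = 0 := by
    have hg' : ∀ t, HasDerivAt
        (fun t => Real.exp (a * t) * (w t - a * u t) + F₂ t) 0 t := by
      intro t
      have he : HasDerivAt (fun t : ℝ => Real.exp (a * t)) (Real.exp (a * t) * a) t := by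
        simpa using ((hasDerivAt_id t).const_mul a).exp
      have hsum : HasDerivAt (fun t => w t - a * u t)
          ((a ^ 2 * u t - f t) - a * w t) t := (hw' t).sub ((hu' t).const_mul a)
      have := (he.mul hsum).add (hF2' t)
      refine this.congr_deriv ?_
      ring
    intro t
    have hconst := is_const_of_deriv_eq_zero (fun x => (hg' x).differentiableAt)
        (fun x => (hg' x).deriv) t 0
    simp only [hw0, hu0, Real.exp_zero, mul_zero, zero_add, add_zero, one_mul, sub_zero] at hconst
    rw [hconst, hF2_def]
    simp
  -- representation of w
  have hwrep : ∀ t, w t = -(Real.exp (a * t) * F₁ t + Real.exp (-(a * t)) * F₂ t) / 2 := by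
    intro t
    have he1 : Real.exp (a * t) * Real.exp (-(a * t)) = 1 := by
      rw [← Real.exp_add]; simp
    have hA : w t + a * u t = -(Real.exp (a * t) * F₁ t) := by
      have h1' : Real.exp (-(a * t)) * (w t + a * u t) = -F₁ t := by linarith [key1 t]
      calc w t + a * u t
          = (Real.exp (a * t) * Real.exp (-(a * t))) * (w t + a * u t) := by rw [he1]; ring
        _ = Real.exp (a * t) * (Real.exp (-(a * t)) * (w t + a * u t)) := by ring
        _ = Real.exp (a * t) * (-F₁ t) := by rw [h1']
        _ = -(Real.exp (a * t) * F₁ t) := by ring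
    have hB : w t - a * u t = -(Real.exp (-(a * t)) * F₂ t) := by
      have h2' : Real.exp (a * t) * (w t - a * u t) = -F₂ t := by linarith [key2 t]
      calc w t - a * u t
          = (Real.exp (a * t) * Real.exp (-(a * t))) * (w t - a * u t) := by rw [he1]; ring
        _ = Real.exp (-(a * t)) * (Real.exp (a * t) * (w t - a * u t)) := by ring
        _ = Real.exp (-(a * t)) * (-F₂ t) := by rw [h2']
        _ = -(Real.exp (-(a * t)) * F₂ t) := by ring
    linear_combination (hA + hB) / 2
  -- pointwise bound on f
  have hfb : ∀ s : ℝ, 0 ≤ s → f s ≤ C * ε ^ p * Real.exp (b * s) := by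
    intro s hs
    have hcosh_le : Real.cosh (a * s) ≤ Real.exp (a * s) := by
      rw [Real.cosh_eq]
      have : Real.exp (-(a * s)) ≤ Real.exp (a * s) :=
        Real.exp_le_exp.mpr (by nlinarith [haN])
      linarith
    have h1 : v s ^ p ≤ (ε * Real.cosh (a * s)) ^ p :=
      Real.rpow_le_rpow (hpos s).le (hupp s) hpN.le
    have h2 : (ε * Real.cosh (a * s)) ^ p ≤ (ε * Real.exp (a * s)) ^ p := by
      apply Real.rpow_le_rpow (by positivity) _ hpN.le
      exact mul_le_mul_of_nonneg_left hcosh_le hε.le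
    have h3 : (ε * Real.exp (a * s)) ^ p = ε ^ p * Real.exp (b * s) := by
      rw [Real.mul_rpow hε.le (Real.exp_pos _).le, ← Real.exp_mul]
      congr 1
      rw [← hap]; ring
    rw [hf_def]
    calc C * v s ^ p ≤ C * (ε * Real.exp (a * s)) ^ p := by
          apply mul_le_mul_of_nonneg_left (le_trans h1 h2) hCN.le
      _ = C * ε ^ p * Real.exp (b * s) := by rw [h3]; ring
  -- bounds on F₁, F₂
  intro t ht
  have hint1 : IntervalIntegrable (fun s => Real.exp (-(a * s)) * f s)
      MeasureTheory.volume 0 t := hc1.intervalIntegrable 0 t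
  have hint2 : IntervalIntegrable (fun s => Real.exp (a * s) * f s)
      MeasureTheory.volume 0 t := hc2.intervalIntegrable 0 t
  have hF1nn : 0 ≤ F₁ t := by
    rw [hF1_def]
    apply intervalIntegral.integral_nonneg ht
    intro s _
    exact mul_nonneg (Real.exp_pos _).le (hf_nonneg s)
  have hF2nn : 0 ≤ F₂ t := by
    rw [hF2_def]
    apply intervalIntegral.integral_nonneg ht
    intro s _
    exact mul_nonneg (Real.exp_pos _).le (hf_nonneg s)
  have hF1b : F₁ t ≤ C * ε ^ p * ((Real.exp (2 * t) - 1) / 2) := by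
    have hmono : F₁ t ≤ ∫ s in (0:ℝ)..t, C * ε ^ p * Real.exp (2 * s) := by
      rw [hF1_def]
      apply intervalIntegral.integral_mono_on ht hint1
        ((continuous_const.mul (Real.continuous_exp.comp
          (continuous_const.mul continuous_id))).intervalIntegrable 0 t)
      intro s hs
      have h1 : Real.exp (-(a * s)) * f s ≤ Real.exp (-(a * s)) * (C * ε ^ p * Real.exp (b * s)) :=
        mul_le_mul_of_nonneg_left (hfb s hs.1) (Real.exp_pos _).le
      have h2 : Real.exp (-(a * s)) * (C * ε ^ p * Real.exp (b * s))
          = C * ε ^ p * Real.exp (2 * s) := by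
        rw [mul_comm (Real.exp (-(a * s))) _, mul_assoc, ← Real.exp_add]
        congr 2
        rw [show (2:ℝ) = b - a from hba.symm]; ring
      exact le_of_le_of_eq h1 h2
    rwa [intervalIntegral.integral_const_mul, integral_exp_mul' 2 t two_ne_zero] at hmono
  have hF2b : F₂ t ≤ C * ε ^ p * ((Real.exp ((N:ℝ) * t) - 1) / (N:ℝ)) := by
    have hmono : F₂ t ≤ ∫ s in (0:ℝ)..t, C * ε ^ p * Real.exp ((N:ℝ) * s) := by
      rw [hF2_def]
      apply intervalIntegral.integral_mono_on ht hint2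
        ((continuous_const.mul (Real.continuous_exp.comp
          (continuous_const.mul continuous_id))).intervalIntegrable 0 t)
      intro s hs
      have h1 : Real.exp (a * s) * f s ≤ Real.exp (a * s) * (C * ε ^ p * Real.exp (b * s)) :=
        mul_le_mul_of_nonneg_left (hfb s hs.1) (Real.exp_pos _).le
      have h2 : Real.exp (a * s) * (C * ε ^ p * Real.exp (b * s))
          = C * ε ^ p * Real.exp ((N:ℝ) * s) := by
        rw [mul_comm (Real.exp (a * s)) _, mul_assoc, ← Real.exp_add]
        congr 2
        rw [show ((N:ℝ)) = b + a from hbaN.symm]; ring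
      exact le_of_le_of_eq h1 h2
    rwa [intervalIntegral.integral_const_mul,
      integral_exp_mul' (N:ℝ) t (by positivity)] at hmono
  -- final estimate
  have hgoal : |w t| ≤ (C * ε ^ p) * (((N:ℝ) + 2) / (4 * (N:ℝ))) * Real.exp (b * t) := by
    rw [hwrep t, abs_div, abs_neg]
    have habs : |Real.exp (a * t) * F₁ t + Real.exp (-(a * t)) * F₂ t|
        = Real.exp (a * t) * F₁ t + Real.exp (-(a * t)) * F₂ t :=
      abs_of_nonneg (add_nonneg (mul_nonneg (Real.exp_pos _).le hF1nn)
        (mul_nonneg (Real.exp_pos _).le hF2nn))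
    rw [habs]
    have hNpos : (0:ℝ) < (N:ℝ) := by linarith
    have hK : (0:ℝ) ≤ C * ε ^ p := le_of_lt (mul_pos hCN (Real.rpow_pos_of_pos hε p))
    have hE1 : Real.exp (a * t) * F₁ t ≤ C * ε ^ p * Real.exp (b * t) / 2 := by
      have h5 := mul_le_mul_of_nonneg_left hF1b (Real.exp_pos (a * t)).le
      have heq : Real.exp (a * t) * Real.exp (2 * t) = Real.exp (b * t) := by
        rw [← Real.exp_add]; congr 1; rw [show b = a + 2 by linarith [hba]]; ring
      have h3 : Real.exp (a * t) * (Real.exp (2 * t) - 1) ≤ Real.exp (b * t) := by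
        nlinarith [Real.exp_pos (a * t), heq]
      have h4 := mul_le_mul_of_nonneg_left h3 hK
      nlinarith [h4, h5]
    have hE2 : Real.exp (-(a * t)) * F₂ t ≤ C * ε ^ p * Real.exp (b * t) / (N:ℝ) := by
      have h5 := mul_le_mul_of_nonneg_left hF2b (Real.exp_pos (-(a * t))).le
      have heq : Real.exp (-(a * t)) * Real.exp ((N:ℝ) * t) = Real.exp (b * t) := by
        rw [← Real.exp_add]; congr 1; rw [show b = -a + (N:ℝ) by linarith [hbaN]]; ring
      have h3 : Real.exp (-(a * t)) * (Real.exp ((N:ℝ) * t) - 1) ≤ Real.exp (b * t) := by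
        nlinarith [Real.exp_pos (-(a * t)), heq]
      have h4 := mul_le_mul_of_nonneg_left h3 hK
      have h6 : Real.exp (-(a * t)) * (C * ε ^ p * ((Real.exp ((N:ℝ) * t) - 1) / (N:ℝ)))
          = C * ε ^ p * (Real.exp (-(a * t)) * (Real.exp ((N:ℝ) * t) - 1)) / (N:ℝ) := by
        ring
      rw [h6] at h5
      have h7 : C * ε ^ p * (Real.exp (-(a * t)) * (Real.exp ((N:ℝ) * t) - 1)) / (N:ℝ)
          ≤ C * ε ^ p * Real.exp (b * t) / (N:ℝ) :=
        (div_le_div_iff_of_pos_right hNpos).mpr h4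
      linarith
    rw [abs_two]
    have hcomb : (Real.exp (a * t) * F₁ t + Real.exp (-(a * t)) * F₂ t) / 2
        ≤ (C * ε ^ p * Real.exp (b * t) / 2 + C * ε ^ p * Real.exp (b * t) / (N:ℝ)) / 2 := by
      linarith
    refine le_trans hcomb (le_of_eq ?_)
    have hN0 : ((N:ℝ)) ≠ 0 := ne_of_gt hNpos
    field_simp
    ring
  have hCeq : (C * ε ^ p) * (((N:ℝ) + 2) / (4 * (N:ℝ)))
      = (((N:ℝ) ^ 2 - 4) / 16) * ε ^ p := by
    have hNpos : (0:ℝ) < (N:ℝ) := by linarith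
    rw [hC_def]
    field_simp
    ring
  have hfin : |w t| ≤ (((N:ℝ) ^ 2 - 4) / 16) * ε ^ p * Real.exp (b * t) :=
    calc |w t| ≤ (C * ε ^ p) * (((N:ℝ) + 2) / (4 * (N:ℝ))) * Real.exp (b * t) := hgoal
      _ = (((N:ℝ) ^ 2 - 4) / 16) * ε ^ p * Real.exp (b * t) := by rw [hCeq]
  simpa [hw_def] using hfin
end

section
/- Let s_{i,j} > 0 for 1 ≤ i ≠ j ≤ n be symmetric positive reals with n ≥ 3, and suppose real numbers p̃_1, …, p̃_n satisfy Σ_{i ≠ i₀} s_{i,i₀} (p̃_i + p̃_{i₀}) = 0 for every i₀. Then all p̃_i = 0. -/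
/-- If `s_{i,j} > 0` is symmetric for `i ≠ j`, `n ≥ 3`, and the reals `p̃_i` satisfy
`Σ_{i ≠ i₀} s_{i,i₀}(p̃_i + p̃_{i₀}) = 0` for every `i₀`, then all `p̃_i = 0`. -/
theorem balancing_system_trivial (n : ℕ) (hn : 3 ≤ n)
    (s : Fin n → Fin n → ℝ)
    (hsym : ∀ i j, s i j = s j i)
    (hpos : ∀ i j, i ≠ j → 0 < s i j)
    (p : Fin n → ℝ)
    (hsys : ∀ i₀ : Fin n, ∑ i ∈ Finset.univ.erase i₀, s i i₀ * (p i + p i₀) = 0) :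
    ∀ i, p i = 0 := by
  classical
  -- the double sum of s i j * (p i + p j)^2 vanishes
  have hswap : ∀ f : Fin n → Fin n → ℝ,
      ∑ i₀ : Fin n, ∑ i ∈ Finset.univ.erase i₀, f i i₀
        = ∑ i : Fin n, ∑ i₀ ∈ Finset.univ.erase i, f i i₀ := by
    intro f
    rw [Finset.sum_comm' (s := Finset.univ) (t' := Finset.univ)]
    intro i j
    simp [ne_comm, and_comm]
  have hS : ∑ i₀ : Fin n, ∑ i ∈ Finset.univ.erase i₀,
      s i i₀ * (p i + p i₀)^2 = 0 := by
    have h1 : ∀ i₀ : Fin n, ∑ i ∈ Finset.univ.erase i₀,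
        s i i₀ * (p i + p i₀) * p i₀ = 0 := by
      intro i₀
      rw [← Finset.sum_mul, hsys i₀, zero_mul]
    have h2 : ∑ i₀ : Fin n, ∑ i ∈ Finset.univ.erase i₀,
        s i i₀ * (p i + p i₀) * p i = 0 := by
      rw [hswap]
      apply Finset.sum_eq_zero
      intro i _
      have := hsys i
      calc ∑ i₀ ∈ Finset.univ.erase i, s i i₀ * (p i + p i₀) * p i
          = (∑ i₀ ∈ Finset.univ.erase i, s i₀ i * (p i₀ + p i)) * p i := by
            rw [Finset.sum_mul]
            apply Finset.sum_congr rfl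
            intro j _
            rw [hsym i j]; ring
        _ = 0 := by rw [hsys i, zero_mul]
    calc ∑ i₀ : Fin n, ∑ i ∈ Finset.univ.erase i₀, s i i₀ * (p i + p i₀)^2
        = (∑ i₀ : Fin n, ∑ i ∈ Finset.univ.erase i₀, s i i₀ * (p i + p i₀) * p i)
          + ∑ i₀ : Fin n, ∑ i ∈ Finset.univ.erase i₀, s i i₀ * (p i + p i₀) * p i₀ := by
          rw [← Finset.sum_add_distrib]
          apply Finset.sum_congr rfl
          intro i₀ _
          rw [← Finset.sum_add_distrib]
          apply Finset.sum_congr rfl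
          intro i _
          ring
      _ = 0 := by rw [h2, Finset.sum_congr rfl fun i₀ _ => h1 i₀]; simp
  -- each term vanishes
  have key : ∀ i j : Fin n, i ≠ j → p i + p j = 0 := by
    intro i j hij
    have hnn : ∀ i₀ ∈ (Finset.univ : Finset (Fin n)),
        0 ≤ ∑ i ∈ Finset.univ.erase i₀, s i i₀ * (p i + p i₀)^2 := by
      intro i₀ _
      apply Finset.sum_nonneg
      intro k hk
      have hk' : k ≠ i₀ := Finset.ne_of_mem_erase hk
      exact mul_nonneg (hpos k i₀ hk').le (sq_nonneg _)
    have h0 := (Finset.sum_eq_zero_iff_of_nonneg hnn).mp hS j (Finset.mem_univ j)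
    have hnn2 : ∀ k ∈ Finset.univ.erase j, 0 ≤ s k j * (p k + p j)^2 := by
      intro k hk
      have hk' : k ≠ j := Finset.ne_of_mem_erase hk
      exact mul_nonneg (hpos k j hk').le (sq_nonneg _)
    have h1 := (Finset.sum_eq_zero_iff_of_nonneg hnn2).mp h0 i
      (Finset.mem_erase.mpr ⟨hij, Finset.mem_univ i⟩)
    have hs := hpos i j hij
    have : (p i + p j)^2 = 0 := by
      by_contra h
      exact h (by nlinarith [sq_nonneg (p i + p j)])
    exact pow_eq_zero_iff (n := 2) (by norm_num) |>.mp this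
  intro i
  -- pick two other indices
  have hcard : 1 ≤ ((Finset.univ : Finset (Fin n)).erase i).card := by
    rw [Finset.card_erase_of_mem (Finset.mem_univ i), Finset.card_univ, Fintype.card_fin]
    omega
  obtain ⟨j, hj⟩ := Finset.card_pos.mp (lt_of_lt_of_le zero_lt_one hcard)
  have hji : j ≠ i := Finset.ne_of_mem_erase hj
  have hcard2 : 0 < (((Finset.univ : Finset (Fin n)).erase i).erase j).card := by
    rw [Finset.card_erase_of_mem hj, Finset.card_erase_of_mem (Finset.mem_univ i),
      Finset.card_univ, Fintype.card_fin]
    omega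
  obtain ⟨k, hk⟩ := Finset.card_pos.mp hcard2
  have hkj : k ≠ j := Finset.ne_of_mem_erase hk
  have hki : k ≠ i := Finset.ne_of_mem_erase (Finset.mem_of_mem_erase hk)
  have h1 := key i j (Ne.symm hji)
  have h2 := key j k (Ne.symm hkj)
  have h3 := key i k (Ne.symm hki)
  linarith
end

section
/- Let j ≥ 0 and γ_j = ((N-2)²/4 + λ_j)^{1/2} with λ_j ≥ 2N, and let y be a solution of y'' - ((N-2)²/4 + λ_j - (N(N+2)/4) v_ε^{4/(N-2)}) y = 0 with y(0) = 1, 0 ≤ y(t) ≤ e^{-δ_j t} for t ≥ 0, where δ_j = (γ_j² - N(N+2)/4)^{1/2} > 0. If v_ε satisfies 0 < v_ε ≤ 1, then y'(0) + γ_j = ∫₀^∞ (N(N+2)/4) v_ε(t)^{4/(N-2)} y(t) e^{-γ_j t} dt, and in particular -γ_j ≤ y'(0) ≤ -γ_j + (N(N+2)/4)(γ_j + δ_j)^{-1}. -/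
open MeasureTheory Set Filter

set_option maxHeartbeats 1000000 in
/-- Let `γ_j = ((N-2)²/4 + λ_j)^{1/2}` with `λ_j ≥ 2N` and
`δ_j = (γ_j² - N(N+2)/4)^{1/2}`.  If `y` solves
`y'' - ((N-2)²/4 + λ_j - (N(N+2)/4) v_ε^{4/(N-2)}) y = 0` on `[0,∞)` with `y(0)=1`
and `0 ≤ y(t) ≤ e^{-δ_j t}`, and `0 < v_ε ≤ 1`, then
`y'(0) + γ_j = ∫₀^∞ (N(N+2)/4) v_ε^{4/(N-2)} y e^{-γ_j t} dt`, and in particular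
`-γ_j ≤ y'(0) ≤ -γ_j + (N(N+2)/4)(γ_j + δ_j)⁻¹`. -/
theorem derivative_identity_at_zero (N : ℕ) (hN : 3 ≤ N)
    (lam γ δ : ℝ) (hlam : 2 * (N : ℝ) ≤ lam)
    (hγ : γ = Real.sqrt (((N : ℝ) - 2) ^ 2 / 4 + lam))
    (hδ : δ = Real.sqrt (γ ^ 2 - (N : ℝ) * ((N : ℝ) + 2) / 4)) (hδpos : 0 < δ)
    (vε : ℝ → ℝ) (hvc : Continuous vε)
    (hv0 : ∀ t, 0 ≤ t → 0 < vε t) (hv1 : ∀ t, 0 ≤ t → vε t ≤ 1)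
    (y : ℝ → ℝ) (hy : ContDiff ℝ 2 y)
    (hode : ∀ t, 0 ≤ t → deriv (deriv y) t
      - ((((N : ℝ) - 2) ^ 2 / 4) + lam
        - ((N : ℝ) * ((N : ℝ) + 2) / 4) * vε t ^ ((4 : ℝ) / ((N : ℝ) - 2))) * y t = 0)
    (hy0 : y 0 = 1)
    (hybd : ∀ t, 0 ≤ t → 0 ≤ y t ∧ y t ≤ Real.exp (-δ * t)) :
    deriv y 0 + γ = (∫ t in Set.Ioi (0 : ℝ),
        ((N : ℝ) * ((N : ℝ) + 2) / 4) * vε t ^ ((4 : ℝ) / ((N : ℝ) - 2)) * y t *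
          Real.exp (-γ * t))
    ∧ -γ ≤ deriv y 0
    ∧ deriv y 0 ≤ -γ + ((N : ℝ) * ((N : ℝ) + 2) / 4) * (γ + δ)⁻¹ := by
  have hN3 : (3 : ℝ) ≤ (N : ℝ) := by exact_mod_cast hN
  set c : ℝ := (N : ℝ) * ((N : ℝ) + 2) / 4 with hc_def
  set p : ℝ := (4 : ℝ) / ((N : ℝ) - 2) with hp_def
  have hc : 0 < c := by rw [hc_def]; nlinarith
  have hp : 0 < p := by rw [hp_def]; apply div_pos <;> nlinarith
  have hγpos : 0 < γ := by
    rw [hγ]; apply Real.sqrt_pos.mpr; nlinarith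
  have hγsq : γ ^ 2 = ((N : ℝ) - 2) ^ 2 / 4 + lam := by
    rw [hγ, Real.sq_sqrt]; nlinarith
  -- differentiability facts
  have hdy : Differentiable ℝ y := hy.differentiable (by norm_num)
  have hd1 : ContDiff ℝ 1 (deriv y) := by
    have h2 : ContDiff ℝ (1 + 1) y := by
      convert hy using 2; exact one_add_one_eq_two
    exact (contDiff_succ_iff_deriv.mp h2).2.2
  have hddy : Differentiable ℝ (deriv y) := hd1.differentiable one_ne_zero
  have hcdy : Continuous (deriv y) := hddy.continuous
  -- rewrite the ODE
  have hode' : ∀ t, 0 ≤ t → deriv (deriv y) t = (γ ^ 2 - c * vε t ^ p) * y t := by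
    intro t ht
    have h := hode t ht
    rw [hγsq]
    linear_combination h
  -- the integrand g and the auxiliary function F
  set g : ℝ → ℝ := fun t => c * vε t ^ p * y t * Real.exp (-γ * t) with hg_def
  set F : ℝ → ℝ := fun t => (deriv y t + γ * y t) * Real.exp (-γ * t) with hF_def
  have hvp : Continuous fun t => vε t ^ p := hvc.rpow_const fun x => Or.inr hp.le
  have hexpc : ∀ k : ℝ, Continuous fun t : ℝ => Real.exp (k * t) := by
    intro k; exact Real.continuous_exp.comp (continuous_const.mul continuous_id)
  have hgc : Continuous g :=
    (((continuous_const.mul hvp).mul hdy.continuous).mul (hexpc (-γ)))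
  have hg_nonneg : ∀ t, 0 ≤ t → 0 ≤ g t := by
    intro t ht
    have h1 : (0:ℝ) ≤ vε t ^ p := Real.rpow_nonneg (hv0 t ht).le p
    have h2 := (hybd t ht).1
    have h3 := Real.exp_pos (-γ * t)
    positivity
  have hg_le : ∀ t, 0 ≤ t → g t ≤ c * Real.exp (-(γ + δ) * t) := by
    intro t ht
    have hvp1 : vε t ^ p ≤ 1 := Real.rpow_le_one (hv0 t ht).le (hv1 t ht) hp.le
    have hyle := (hybd t ht).2
    have hy0' := (hybd t ht).1
    have hvpn : (0:ℝ) ≤ vε t ^ p := Real.rpow_nonneg (hv0 t ht).le p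
    have hE := (Real.exp_pos (-γ * t)).le
    have hsplit : Real.exp (-(γ + δ) * t) = Real.exp (-δ * t) * Real.exp (-γ * t) := by
      rw [← Real.exp_add]; ring_nf
    rw [hsplit, hg_def]
    calc c * vε t ^ p * y t * Real.exp (-γ * t)
        ≤ c * 1 * Real.exp (-δ * t) * Real.exp (-γ * t) := by gcongr
      _ = c * (Real.exp (-δ * t) * Real.exp (-γ * t)) := by ring
  have hγδ : 0 < γ + δ := by linarith
  have hb_int : IntegrableOn (fun t => c * Real.exp (-(γ + δ) * t)) (Ioi (0:ℝ)) :=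
    (exp_neg_integrableOn_Ioi 0 hγδ).const_mul c
  have hg_int : IntegrableOn g (Ioi (0:ℝ)) := by
    apply Integrable.mono' hb_int (hgc.aestronglyMeasurable.restrict)
    filter_upwards [ae_restrict_mem measurableSet_Ioi] with t ht
    rw [Real.norm_eq_abs, abs_of_nonneg (hg_nonneg t ht.le)]
    exact hg_le t ht.le
  -- derivative of exp (k * t)
  have hexp' : ∀ (k t : ℝ), HasDerivAt (fun s => Real.exp (k * s)) (k * Real.exp (k * t)) t := by
    intro k t
    have h : HasDerivAt (fun s : ℝ => k * s) k t := by
      simpa using (hasDerivAt_id t).const_mul k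
    simpa [mul_comm] using h.exp
  -- derivative of F
  have hF' : ∀ t, 0 ≤ t → HasDerivAt F (-(g t)) t := by
    intro t ht
    have h1 : HasDerivAt y (deriv y t) t := (hdy t).hasDerivAt
    have h2 : HasDerivAt (deriv y) (deriv (deriv y) t) t := (hddy t).hasDerivAt
    have h4 : HasDerivAt F ((deriv (deriv y) t + γ * deriv y t) * Real.exp (-γ * t)
        + (deriv y t + γ * y t) * (-γ * Real.exp (-γ * t))) t :=
      (h2.add (h1.const_mul γ)).mul (hexp' (-γ) t)
    convert h4 using 1
    rw [hode' t ht, hg_def]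
    ring
  -- FTC on [0, T]
  have hFTC : ∀ T, 0 ≤ T → F 0 = F T + ∫ t in (0:ℝ)..T, g t := by
    intro T hT
    have hint : IntervalIntegrable (fun t => -(g t)) volume 0 T :=
      (hgc.neg).intervalIntegrable _ _
    have h := intervalIntegral.integral_eq_sub_of_hasDerivAt
      (f := F) (f' := fun t => -(g t)) ?_ hint
    · rw [intervalIntegral.integral_neg] at h
      linarith [h]
    · intro t ht
      rw [Set.uIcc_of_le hT] at ht
      exact hF' t ht.1
  set I : ℝ := ∫ t in Ioi (0:ℝ), g t with hI_def
  have hInt_tendsto : Tendsto (fun T => ∫ t in (0:ℝ)..T, g t) atTop (nhds I) :=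
    intervalIntegral_tendsto_integral_Ioi 0 hg_int tendsto_id
  have hF_tendsto : Tendsto F atTop (nhds (F 0 - I)) := by
    have hev : (fun T => F 0 - ∫ t in (0:ℝ)..T, g t) =ᶠ[atTop] F := by
      filter_upwards [eventually_ge_atTop (0:ℝ)] with T hT
      have := hFTC T hT; linarith
    exact (tendsto_const_nhds.sub hInt_tendsto).congr' hev
  set L : ℝ := F 0 - I with hL_def
  -- interval integrals of g are at most I
  have hInt_le : ∀ T, 0 ≤ T → (∫ t in (0:ℝ)..T, g t) ≤ I := by
    intro T hT
    rw [intervalIntegral.integral_of_le hT, hI_def]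
    apply setIntegral_mono_set hg_int
    · filter_upwards [ae_restrict_mem measurableSet_Ioi] with x hx
      exact hg_nonneg x hx.le
    · exact HasSubset.Subset.eventuallyLE Ioc_subset_Ioi_self
  have hFgeL : ∀ t, 0 ≤ t → L ≤ F t := by
    intro t ht
    have h := hFTC t ht
    have h2 := hInt_le t ht
    rw [hL_def]; linarith
  have hFanti : ∀ s t, 0 ≤ s → s ≤ t → F t ≤ F s := by
    intro s t hs hst
    have h1 := hFTC s hs
    have h2 := hFTC t (hs.trans hst)
    have h3 : (∫ u in (0:ℝ)..s, g u) + ∫ u in s..t, g u = ∫ u in (0:ℝ)..t, g u :=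
      intervalIntegral.integral_add_adjacent_intervals
        (hgc.intervalIntegrable _ _) (hgc.intervalIntegrable _ _)
    have h4 : (0:ℝ) ≤ ∫ u in s..t, g u :=
      intervalIntegral.integral_nonneg hst fun u hu => hg_nonneg u (hs.trans hu.1)
    linarith
  -- the function H = y * exp(γ t) and its FTC
  have hHd : ∀ t : ℝ, HasDerivAt (fun s => y s * Real.exp (γ * s))
      ((deriv y t + γ * y t) * Real.exp (γ * t)) t := by
    intro t
    have h := ((hdy t).hasDerivAt).mul (hexp' γ t)
    refine h.congr_deriv ?_; ring
  have hHcont : Continuous fun t => (deriv y t + γ * y t) * Real.exp (γ * t) :=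
    ((hcdy.add (continuous_const.mul hdy.continuous)).mul (hexpc γ))
  have hH_FTC : ∀ a b : ℝ, a ≤ b →
      (∫ t in a..b, (deriv y t + γ * y t) * Real.exp (γ * t))
        = y b * Real.exp (γ * b) - y a * Real.exp (γ * a) := by
    intro a b hab
    exact intervalIntegral.integral_eq_sub_of_hasDerivAt (fun t _ => hHd t)
      (hHcont.intervalIntegrable _ _)
  have hexpinv : ∀ t : ℝ, Real.exp (-γ * t) * Real.exp (γ * t) = 1 := by
    intro t; rw [← Real.exp_add]; ring_nf; exact Real.exp_zero
  -- L = 0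
  have hLzero : L = 0 := by
    rcases lt_trichotomy L 0 with hL | hL | hL
    · -- L < 0 : find t₀ ≥ 0 with F t₀ < 0, then H decreases linearly to -∞
      exfalso
      obtain ⟨t₀, ht₀, ht₀0⟩ : ∃ t₀, F t₀ < 0 ∧ 0 ≤ t₀ := by
        have hev : ∀ᶠ T in atTop, F T < 0 :=
          hF_tendsto.eventually_lt_const hL
        exact (hev.and (eventually_ge_atTop (0:ℝ))).exists
      set t₁ : ℝ := t₀ + (y t₀ * Real.exp (γ * t₀) + 1) / (-F t₀) with ht₁_def
      have hnum : 0 < y t₀ * Real.exp (γ * t₀) + 1 := by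
        have := (hybd t₀ ht₀0).1
        have := (Real.exp_pos (γ * t₀)).le
        positivity
      have ht₀₁ : t₀ < t₁ := by
        rw [ht₁_def]
        have : 0 < (y t₀ * Real.exp (γ * t₀) + 1) / (-F t₀) := by
          apply div_pos hnum; linarith
        linarith
      have hmono : (∫ t in t₀..t₁, (deriv y t + γ * y t) * Real.exp (γ * t))
          ≤ ∫ _ in t₀..t₁, F t₀ := by
        apply intervalIntegral.integral_mono_on ht₀₁.le
          (hHcont.intervalIntegrable _ _) (intervalIntegrable_const)
        intro u hu
        have hu0 : 0 ≤ u := ht₀0.trans hu.1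
        have hE1 : 1 ≤ Real.exp (γ * u) := by
          apply Real.one_le_exp; positivity
        have hEpos := Real.exp_pos (γ * u)
        have hFu : F u ≤ F t₀ := hFanti t₀ u ht₀0 hu.1
        have hFuval : F u = (deriv y u + γ * y u) * Real.exp (-γ * u) := rfl
        have hA1 : deriv y u + γ * y u ≤ F t₀ * Real.exp (γ * u) := by
          have h := mul_le_mul_of_nonneg_right hFu hEpos.le
          rw [hFuval, mul_assoc, hexpinv u, mul_one] at h
          exact h
        have hA2 : F t₀ * Real.exp (γ * u) ≤ F t₀ := by nlinarith
        have hA : deriv y u + γ * y u ≤ F t₀ := hA1.trans hA2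
        nlinarith
      rw [hH_FTC t₀ t₁ ht₀₁.le, intervalIntegral.integral_const, smul_eq_mul] at hmono
      have hT : t₁ - t₀ = (y t₀ * Real.exp (γ * t₀) + 1) / (-F t₀) := by
        rw [ht₁_def]; ring
      have hprod : (t₁ - t₀) * F t₀ = -(y t₀ * Real.exp (γ * t₀) + 1) := by
        rw [hT]; field_simp [ne_of_lt ht₀]
      have hH1pos : 0 ≤ y t₁ * Real.exp (γ * t₁) := by
        have := (hybd t₁ (ht₀0.trans ht₀₁.le)).1
        have := (Real.exp_pos (γ * t₁)).le
        positivity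
      nlinarith
    · exact hL
    · -- L > 0 : H grows like (L/γ) exp(γ T), contradicting y ≤ exp(-δ t)
      exfalso
      have hkey : ∀ T, 0 ≤ T →
          1 + L / γ * (Real.exp (γ * T) - 1) ≤ Real.exp (-δ * T) * Real.exp (γ * T) := by
        intro T hT
        -- lower bound for the integral
        have hPd : ∀ t : ℝ, HasDerivAt (fun s => L / γ * Real.exp (γ * s))
            (L * Real.exp (γ * t)) t := by
          intro t
          have h := (hexp' γ t).const_mul (L / γ)
          refine h.congr_deriv ?_
          field_simp
        have hPint : (∫ t in (0:ℝ)..T, L * Real.exp (γ * t))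
            = L / γ * Real.exp (γ * T) - L / γ * Real.exp (γ * 0) :=
          intervalIntegral.integral_eq_sub_of_hasDerivAt (fun t _ => hPd t)
            ((continuous_const.mul (hexpc γ)).intervalIntegrable _ _)
        have hmono : (∫ t in (0:ℝ)..T, L * Real.exp (γ * t))
            ≤ ∫ t in (0:ℝ)..T, (deriv y t + γ * y t) * Real.exp (γ * t) := by
          apply intervalIntegral.integral_mono_on hT
            ((continuous_const.mul (hexpc γ)).intervalIntegrable _ _)
            (hHcont.intervalIntegrable _ _)
          intro u hu
          have hE1 : 1 ≤ Real.exp (γ * u) := by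
            exact Real.one_le_exp (mul_nonneg hγpos.le hu.1)
          have hEpos := Real.exp_pos (γ * u)
          have hFu : L ≤ F u := hFgeL u hu.1
          have hFuval : F u = (deriv y u + γ * y u) * Real.exp (-γ * u) := rfl
          have hA1 : L * Real.exp (γ * u) ≤ deriv y u + γ * y u := by
            have h := mul_le_mul_of_nonneg_right hFu hEpos.le
            rw [hFuval, mul_assoc, hexpinv u, mul_one] at h
            exact h
          have hApos : 0 ≤ deriv y u + γ * y u := by nlinarith
          show L * Real.exp (γ * u) ≤ (deriv y u + γ * y u) * Real.exp (γ * u)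
          nlinarith
        rw [hH_FTC 0 T hT] at hmono
        rw [hPint] at hmono
        have hyT := (hybd T hT).2
        have hETpos := (Real.exp_pos (γ * T)).le
        have hyTb : y T * Real.exp (γ * T) ≤ Real.exp (-δ * T) * Real.exp (γ * T) := by
          gcongr
        simp only [mul_zero, Real.exp_zero, hy0, one_mul] at hmono
        nlinarith
      -- choose a large T to get a contradiction
      set K : ℝ := L / γ with hK_def
      have hK : 0 < K := div_pos hL hγpos
      set T : ℝ := max (Real.log 2 / γ) (Real.log (2 / K) / δ) with hT_def
      have hlog2 : 0 < Real.log 2 := Real.log_pos (by norm_num)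
      have hT0 : 0 ≤ T := le_trans (by positivity) (le_max_left _ _)
      have hE2 : (2:ℝ) ≤ Real.exp (γ * T) := by
        have h1 : Real.log 2 ≤ γ * T := by
          have := le_max_left (Real.log 2 / γ) (Real.log (2 / K) / δ)
          rw [hT_def]
          calc Real.log 2 = γ * (Real.log 2 / γ) := by field_simp
            _ ≤ γ * max (Real.log 2 / γ) (Real.log (2 / K) / δ) := by
                apply mul_le_mul_of_nonneg_left this hγpos.le
        calc (2:ℝ) = Real.exp (Real.log 2) := (Real.exp_log (by norm_num)).symm
          _ ≤ Real.exp (γ * T) := Real.exp_le_exp.mpr h1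
      have hEδ : Real.exp (-δ * T) ≤ K / 2 := by
        have h1 : Real.log (2 / K) ≤ δ * T := by
          have := le_max_right (Real.log 2 / γ) (Real.log (2 / K) / δ)
          rw [hT_def]
          calc Real.log (2 / K) = δ * (Real.log (2 / K) / δ) := by field_simp
            _ ≤ δ * max (Real.log 2 / γ) (Real.log (2 / K) / δ) := by
                apply mul_le_mul_of_nonneg_left this hδpos.le
        have h2 : -δ * T ≤ Real.log (K / 2) := by
          have : Real.log (K / 2) = -Real.log (2 / K) := by
            rw [← Real.log_inv]; congr 1; field_simp
          rw [this]; linarith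
        calc Real.exp (-δ * T) ≤ Real.exp (Real.log (K / 2)) := Real.exp_le_exp.mpr h2
          _ = K / 2 := Real.exp_log (by positivity)
      have h := hkey T hT0
      have hETpos := Real.exp_pos (γ * T)
      nlinarith [mul_le_mul_of_nonneg_right hEδ hETpos.le]
    -- end trichotomy
  -- conclude
  have hF0 : F 0 = deriv y 0 + γ := by
    rw [hF_def]
    simp [hy0]
  have hmain : deriv y 0 + γ = I := by
    rw [hL_def, hF0] at hLzero; linarith
  have hInonneg : 0 ≤ I := by
    rw [hI_def]
    apply setIntegral_nonneg measurableSet_Ioi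
    intro t ht
    exact hg_nonneg t (le_of_lt ht)
  have hIle : I ≤ c * (γ + δ)⁻¹ := by
    have h1 : I ≤ ∫ t in Ioi (0:ℝ), c * Real.exp (-(γ + δ) * t) := by
      rw [hI_def]
      apply setIntegral_mono_on hg_int hb_int measurableSet_Ioi
      intro t ht
      exact hg_le t (le_of_lt ht)
    have h2 : (∫ t in Ioi (0:ℝ), Real.exp (-(γ + δ) * t)) = (γ + δ)⁻¹ := by
      have hderiv : ∀ x ∈ Ici (0:ℝ),
          HasDerivAt (fun t => -(γ + δ)⁻¹ * Real.exp (-(γ + δ) * t))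
            (Real.exp (-(γ + δ) * x)) x := by
        intro x _
        have h := (hexp' (-(γ + δ)) x).const_mul (-(γ + δ)⁻¹)
        refine h.congr_deriv ?_
        field_simp
      have htend : Tendsto (fun t => -(γ + δ)⁻¹ * Real.exp (-(γ + δ) * t)) atTop (nhds 0) := by
        have h1 : Tendsto (fun t : ℝ => Real.exp (-(γ + δ) * t)) atTop (nhds 0) := by
          have h2 : Tendsto (fun t : ℝ => (γ + δ) * t) atTop atTop :=
            Tendsto.const_mul_atTop hγδ tendsto_id
          have := Real.tendsto_exp_neg_atTop_nhds_zero.comp h2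
          apply this.congr
          intro x; simp [Function.comp]; ring_nf
        have := h1.const_mul (-(γ + δ)⁻¹)
        simpa using this
      have := integral_Ioi_of_hasDerivAt_of_tendsto' hderiv
        (exp_neg_integrableOn_Ioi 0 hγδ) htend
      rw [this]
      simp
    calc I ≤ ∫ t in Ioi (0:ℝ), c * Real.exp (-(γ + δ) * t) := h1
      _ = c * (γ + δ)⁻¹ := by rw [integral_const_mul, h2]
  refine ⟨hmain, by linarith, by linarith⟩
end
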